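/- arXiv:1611.04868 — 6 statements merged into one kernel-verified Lean document; each statement's English description precedes it below -/
import Mathlib

section
/- Let m ≥ 3 and let (x_i, y_i) ∈ ℤ², indexed cyclically by i ∈ ℤ/mℤ, satisfy: (i) |x_{i+1} − x_i| = 1 for all i; (ii) strict convexity: for all i and all k with k ≠ i and k ≠ i+1, (x_i − x_k)(y_{i+1} − y_i) − (x_{i+1} − x_i)(y_i − y_k) > 0; (iii) x_0 = 0 and x_i ≥ 0 for all i. Then m is even, say m = 2n, and x_i = min(i, 2n − i) for all 0 ≤ i ≤ 2n − 1, i.e. the x-coordinates are 0, 1, 2, …, n, n−1, …, 1 in cyclic order. -/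
/-- If there are local minima of `x` at two distinct indices `i` and `j`,
then `x j < x i` (and by symmetry `x i < x j`, a contradiction). -/
private lemma aux_lt (m : ℕ) (hm : 3 ≤ m) (x y : ZMod m → ℤ)
    (h2 : ∀ i k : ZMod m, k ≠ i → k ≠ i + 1 →
      0 < (x i - x k) * (y (i + 1) - y i) - (x (i + 1) - x i) * (y i - y k))
    (i j : ZMod m)
    (hi1 : x (i + 1) - x i = 1) (hi2 : x i - x (i - 1) = -1)
    (hj1 : x (j + 1) - x j = 1) (hj2 : x j - x (j - 1) = -1)
    (hne : i ≠ j) : x j < x i := by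
  haveI : NeZero m := ⟨by omega⟩
  have hdvd : ∀ a : ℕ, ((a : ℕ) : ZMod m) = 0 → m ∣ a := fun a ha =>
    (ZMod.natCast_eq_zero_iff a m).mp ha
  have hc : j - 1 + 1 = j := by ring
  have h2ne : (j + 1 : ZMod m) ≠ j - 1 := by
    intro h
    have h2z : ((2 : ℕ) : ZMod m) = 0 := by push_cast; linear_combination h
    have := Nat.le_of_dvd (by norm_num) (hdvd 2 h2z)
    omega
  have h1ne : (j + 1 : ZMod m) ≠ j := by
    intro h
    have h1z : ((1 : ℕ) : ZMod m) = 0 := by push_cast; linear_combination h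
    have := Nat.le_of_dvd (by norm_num) (hdvd 1 h1z)
    omega
  have key := h2 (j - 1) (j + 1) h2ne (by rw [hc]; exact h1ne)
  rw [hc] at key
  have hxj1 : x (j + 1) = x j + 1 := by linarith
  have hxjm : x (j - 1) = x j + 1 := by linarith
  rw [hxj1, hxjm] at key
  have hts : y (j + 1) < y (j - 1) := by nlinarith [key]
  have hij1 : i ≠ j + 1 := by
    intro h
    rw [h] at hi2
    have hb : j + 1 - 1 = j := by ring
    rw [hb] at hi2
    linarith
  have hijm : i ≠ j - 1 := by
    intro h
    rw [h, hc] at hi1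
    linarith
  have kA := h2 j i hne hij1
  have kB := h2 (j - 1) i hijm (by rw [hc]; exact hne)
  rw [hc, hxjm] at kB
  rw [hxj1] at kA
  by_contra hle
  push_neg at hle
  nlinarith [kA, kB, hts, mul_nonneg (sub_nonneg.2 hle) (sub_nonneg.2 hts.le)]

/-- Standard form of the x-coordinates: a cyclic sequence of lattice points `(xᵢ, yᵢ)`
with `|xᵢ₊₁ - xᵢ| = 1`, strictly convex, `x₀ = 0` and all `xᵢ ≥ 0`, has an even number
`m = 2n` of points and `xᵢ = min(i, 2n - i)`. -/
theorem stmt_3 (m : ℕ) (hm : 3 ≤ m) (x y : ZMod m → ℤ)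
    (h1 : ∀ i : ZMod m, |x (i + 1) - x i| = 1)
    (h2 : ∀ i k : ZMod m, k ≠ i → k ≠ i + 1 →
      0 < (x i - x k) * (y (i + 1) - y i) - (x (i + 1) - x i) * (y i - y k))
    (h3 : x 0 = 0) (h4 : ∀ i : ZMod m, 0 ≤ x i) :
    ∃ n : ℕ, m = 2 * n ∧ ∀ i : ℕ, i < 2 * n →
      x (i : ZMod m) = ((min i (2 * n - i) : ℕ) : ℤ) := by
  classical
  haveI : NeZero m := ⟨by omega⟩
  have cast1 : ∀ i : ℕ, ((i + 1 : ℕ) : ZMod m) = (i : ZMod m) + 1 := by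
    intro i; push_cast; ring
  have habs : ∀ i : ℕ, x ((i + 1 : ℕ) : ZMod m) - x ((i : ℕ) : ZMod m) = 1 ∨
      x ((i + 1 : ℕ) : ZMod m) - x ((i : ℕ) : ZMod m) = -1 := by
    intro i
    have h := h1 ((i : ℕ) : ZMod m)
    rw [← cast1 i] at h
    exact (abs_eq (by norm_num : (0:ℤ) ≤ 1)).mp h
  have hxm1 : x (-1 : ZMod m) = 1 := by
    have h := h1 (-1 : ZMod m)
    have e : (-1 : ZMod m) + 1 = 0 := by ring
    rw [e, h3] at h
    have h4' := h4 (-1)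
    rcases (abs_eq (by norm_num : (0:ℤ) ≤ 1)).mp h with h' | h' <;> linarith
  have hx1 : x (1 : ZMod m) = 1 := by
    have h := h1 0
    rw [zero_add, h3] at h
    have h4' := h4 1
    rcases (abs_eq (by norm_num : (0:ℤ) ≤ 1)).mp h with h' | h' <;> linarith
  have hl01 : x ((0 : ZMod m) + 1) - x 0 = 1 := by rw [zero_add, hx1, h3]; ring
  have hl02 : x (0 : ZMod m) - x (0 - 1) = -1 := by
    rw [zero_sub, hxm1, h3]; ring
  have uniq : ∀ i : ZMod m, x (i + 1) - x i = 1 → x i - x (i - 1) = -1 → i = 0 := by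
    intro i hia hib
    by_contra hne
    have a1 := aux_lt m hm x y h2 i 0 hia hib hl01 hl02 hne
    have a2 := aux_lt m hm x y h2 0 i hl01 hl02 hia hib (Ne.symm hne)
    linarith
  -- the last step is -1
  have e2 : ((m - 1 + 1 : ℕ) : ZMod m) = 0 := by
    rw [Nat.sub_add_cancel (by omega : 1 ≤ m)]; exact ZMod.natCast_self m
  have e1 : ((m - 1 : ℕ) : ZMod m) = -1 := by
    have h := e2
    rw [cast1] at h
    exact eq_neg_of_add_eq_zero_left h
  have hQlast : x ((m - 1 + 1 : ℕ) : ZMod m) - x ((m - 1 : ℕ) : ZMod m) = -1 := by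
    rw [e1, e2, h3, hxm1]; ring
  have hex : ∃ i : ℕ, x ((i + 1 : ℕ) : ZMod m) - x ((i : ℕ) : ZMod m) = -1 :=
    ⟨m - 1, hQlast⟩
  set n := Nat.find hex with hndef
  have hfind : x ((n + 1 : ℕ) : ZMod m) - x ((n : ℕ) : ZMod m) = -1 := Nat.find_spec hex
  have hn_le : n ≤ m - 1 := Nat.find_le hQlast
  have hnpos : 0 < n := by
    rcases Nat.eq_zero_or_pos n with h | h
    swap
    · exact h
    · exfalso
      have := hfind
      rw [h] at this
      have c0 : ((0 : ℕ) : ZMod m) = 0 := by norm_num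
      have c1 : ((0 + 1 : ℕ) : ZMod m) = 1 := by norm_num
      rw [c0, c1, h3, hx1] at this
      norm_num at this
  have hup : ∀ i : ℕ, i < n → x ((i + 1 : ℕ) : ZMod m) - x ((i : ℕ) : ZMod m) = 1 := by
    intro i hi
    rcases habs i with h | h
    · exact h
    · exact absurd h (Nat.find_min hex hi)
  have hdown : ∀ d : ℕ, n + d < m →
      x ((n + d + 1 : ℕ) : ZMod m) - x ((n + d : ℕ) : ZMod m) = -1 := by
    intro d
    induction d with
    | zero => intro _; simpa using hfind
    | succ d ih =>
      intro hlt
      have hprev := ih (by omega)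
      rcases habs (n + (d + 1)) with h | h
      · exfalso
        have c1 : ((n + (d + 1) + 1 : ℕ) : ZMod m) = ((n + (d + 1) : ℕ) : ZMod m) + 1 :=
          cast1 _
        have c2 : ((n + (d + 1) : ℕ) : ZMod m) - 1 = ((n + d : ℕ) : ZMod m) := by
          push_cast; ring
        have hz := uniq ((n + (d + 1) : ℕ) : ZMod m)
          (by rw [← c1]; exact h)
          (by rw [c2]
              have : (n + (d + 1) : ℕ) = (n + d + 1 : ℕ) := by omega
              rw [this]; exact hprev)
        have hdv : m ∣ n + (d + 1) := (ZMod.natCast_eq_zero_iff _ m).mp hz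
        have := Nat.le_of_dvd (by omega) hdv
        omega
      · exact h
  have hupval : ∀ i : ℕ, i ≤ n → x ((i : ℕ) : ZMod m) = (i : ℤ) := by
    intro i
    induction i with
    | zero => intro _; simpa using h3
    | succ i ih =>
      intro hle
      have hx := ih (by omega)
      have hs := hup i (by omega)
      have ec : ((i + 1 : ℕ) : ℤ) = (i : ℤ) + 1 := by push_cast; ring
      rw [ec]
      linarith
  have hdownval : ∀ d : ℕ, n + d ≤ m →
      x ((n + d : ℕ) : ZMod m) = (n : ℤ) - (d : ℤ) := by
    intro d
    induction d with
    | zero => intro _; simpa using hupval n le_rfl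
    | succ d ih =>
      intro hle
      have hx := ih (by omega)
      have hs := hdown d (by omega)
      have e : (n + (d + 1) : ℕ) = (n + d + 1 : ℕ) := by omega
      rw [e]
      have ec : ((d + 1 : ℕ) : ℤ) = (d : ℤ) + 1 := by push_cast; ring
      rw [ec]
      linarith
  have hPm : x ((m : ℕ) : ZMod m) = (n : ℤ) - ((m - n : ℕ) : ℤ) := by
    have h := hdownval (m - n) (by omega)
    have e : (n + (m - n) : ℕ) = m := by omega
    rw [e] at h
    exact h
  have hPm0 : x ((m : ℕ) : ZMod m) = 0 := by rw [ZMod.natCast_self]; exact h3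
  have hm2n : m = 2 * n := by
    rw [hPm0] at hPm
    omega
  refine ⟨n, hm2n, ?_⟩
  intro i hi
  rcases le_or_gt i n with h | h
  · have hx := hupval i h
    rw [hx]
    omega
  · have hd := hdownval (i - n) (by omega)
    have e : (n + (i - n) : ℕ) = i := by omega
    rw [e] at hd
    rw [hd]
    omega
end

section
/- Let ξ, X ∈ ℤ³ be primitive vectors (each has the gcd of its three coordinates equal to 1) with ξ·X = 0. Then there exists an integer 3×3 matrix g with det g = 1 such that the first row of g equals ξ and g·X = (0, 0, 1)ᵀ. -/
/-!
First move `X` to `e₃ = (0,0,1)`: if `d = gcd(X₀, X₁)` and `X = (d a, d b, z)` with `p a + q b = 1`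
and `r d + s z = 1`, the matrix with rows `(z p, z q, -d)`, `(-b, a, 0)`, `(r p, r q, s)` lies in
`SL(3, ℤ)` and sends `X` to `e₃`. Transporting `ξ` by this matrix `B` gives the row vector
`η = ξ B⁻¹` with `η₂ = η · e₃ = ξ · X = 0`; a Bézout vector `c` with `ξ · c = 1` gives
`η · (B c) = 1`, so `η₀, η₁` are coprime and `(η₀, η₁)` is the first row of some `C ∈ SL(2, ℤ)`.
Then `C ⊕ 1` fixes `e₃` and has first row `η`, so `g = (C ⊕ 1) B` works.
-/

open Matrix

lemma Int.exists_isCoprime_gcd_mul (x y : ℤ) :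
    ∃ a b : ℤ, IsCoprime a b ∧ x = x.gcd y * a ∧ y = x.gcd y * b := by
  rcases eq_or_ne (x.gcd y) 0 with h | h
  · obtain ⟨rfl, rfl⟩ := Int.gcd_eq_zero_iff.mp h
    exact ⟨1, 0, isCoprime_one_left, by simp, by simp⟩
  · have h' : (x.gcd y : ℤ) ≠ 0 := Int.natCast_ne_zero.mpr h
    refine ⟨x / x.gcd y, y / x.gcd y, ?_, (Int.mul_ediv_cancel' (Int.gcd_dvd_left _ _)).symm,
      (Int.mul_ediv_cancel' (Int.gcd_dvd_right _ _)).symm⟩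
    rw [Int.coe_gcd] at h' ⊢
    exact isCoprime_div_gcd_div_gcd_of_gcd_ne_zero h'

lemma exists_dotProduct_eq_one_of_gcd_eq_one (v : Fin 3 → ℤ)
    (hv : Int.gcd (Int.gcd (v 0) (v 1)) (v 2) = 1) : ∃ c, v ⬝ᵥ c = 1 := by
  obtain ⟨r, s, hrs⟩ := Int.isCoprime_iff_gcd_eq_one.mpr hv
  refine ⟨![r * Int.gcdA (v 0) (v 1), r * Int.gcdB (v 0) (v 1), s], ?_⟩
  simp only [dotProduct, Fin.sum_univ_three, cons_val_zero, cons_val_one, cons_val]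
  linear_combination hrs - r * Int.gcd_eq_gcd_ab (v 0) (v 1)

lemma exists_det_eq_one_mulVec_eq_of_gcd_eq_one (X : Fin 3 → ℤ)
    (hX : Int.gcd (Int.gcd (X 0) (X 1)) (X 2) = 1) :
    ∃ B : Matrix (Fin 3) (Fin 3) ℤ, B.det = 1 ∧ B *ᵥ X = ![0, 0, 1] := by
  obtain ⟨a, b, ⟨p, q, hab⟩, hXa, hXb⟩ := Int.exists_isCoprime_gcd_mul (X 0) (X 1)
  set d : ℤ := (Int.gcd (X 0) (X 1) : ℤ)
  obtain ⟨r, s, hrs⟩ : IsCoprime d (X 2) := Int.isCoprime_iff_gcd_eq_one.mpr hX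
  refine ⟨!![X 2 * p, X 2 * q, -d; -b, a, 0; r * p, r * q, s], ?_, ?_⟩
  · rw [det_fin_three]
    simp only [of_apply, cons_val', cons_val_zero, cons_val_one, cons_val, cons_val_fin_one]
    linear_combination (X 2 * s + d * r) * hab + hrs
  · ext i
    fin_cases i <;>
      simp only [mulVec, dotProduct, Fin.sum_univ_three, of_apply, cons_val', cons_val_zero,
        cons_val_one, cons_val, cons_val_fin_one, Fin.zero_eta, Fin.mk_one, Fin.reduceFinMk]
    · linear_combination X 2 * p * hXa + X 2 * q * hXb + d * X 2 * hab
    · linear_combination a * hXb - b * hXa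
    · linear_combination r * p * hXa + r * q * hXb + d * r * hab + hrs

lemma exists_det_eq_one_row_zero_eq_mulVec_eq_of_isCoprime (u : Fin 3 → ℤ)
    (hu : IsCoprime (u 0) (u 1)) (hu2 : u 2 = 0) :
    ∃ C : Matrix (Fin 3) (Fin 3) ℤ, C.det = 1 ∧ C 0 = u ∧ C *ᵥ ![0, 0, 1] = ![0, 0, 1] := by
  obtain ⟨p, q, hpq⟩ := hu
  refine ⟨!![u 0, u 1, 0; -q, p, 0; 0, 0, 1], ?_, ?_, ?_⟩
  · rw [det_fin_three]
    simp only [of_apply, cons_val', cons_val_zero, cons_val_one, cons_val, cons_val_fin_one]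
    linear_combination hpq
  · ext j
    fin_cases j <;> simp [hu2]
  · ext i
    fin_cases i <;> simp [mulVec, dotProduct, Fin.sum_univ_three]

lemma isCoprime_of_dotProduct_eq_one {η w : Fin 3 → ℤ} (hη2 : η 2 = 0) (h : η ⬝ᵥ w = 1) :
    IsCoprime (η 0) (η 1) :=
  ⟨w 0, w 1, by simpa [dotProduct, Fin.sum_univ_three, hη2, mul_comm] using h⟩

/-- Given primitive vectors `ξ, X ∈ ℤ³` with `ξ · X = 0`, there is a matrix
`g ∈ SL(3, ℤ)` whose first row is `ξ` and with `g X = (0,0,1)`. -/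
theorem stmt_5 (ξ X : Fin 3 → ℤ)
    (hξ : Int.gcd (Int.gcd (ξ 0) (ξ 1)) (ξ 2) = 1)
    (hX : Int.gcd (Int.gcd (X 0) (X 1)) (X 2) = 1)
    (horth : ξ 0 * X 0 + ξ 1 * X 1 + ξ 2 * X 2 = 0) :
    ∃ g : Matrix (Fin 3) (Fin 3) ℤ, g.det = 1 ∧ (∀ j, g 0 j = ξ j) ∧
      g.mulVec X = ![0, 0, 1] := by
  obtain ⟨B, hBdet, hBX⟩ := exists_det_eq_one_mulVec_eq_of_gcd_eq_one X hX
  obtain ⟨c, hc⟩ := exists_dotProduct_eq_one_of_gcd_eq_one ξ hξ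
  set η := ξ ᵥ* B.adjugate
  have hηB : η ᵥ* B = ξ := by
    rw [vecMul_vecMul, adjugate_mul, hBdet, one_smul, vecMul_one]
  have hη2 : η 2 = 0 := by
    have h : η ⬝ᵥ (B *ᵥ X) = ξ ⬝ᵥ X := by rw [dotProduct_mulVec, hηB]
    simpa [hBX, dotProduct, Fin.sum_univ_three, horth] using h
  have hη : IsCoprime (η 0) (η 1) :=
    isCoprime_of_dotProduct_eq_one (w := B *ᵥ c) hη2 (by rw [dotProduct_mulVec, hηB, hc])
  obtain ⟨C, hCdet, hC0, hCe⟩ := exists_det_eq_one_row_zero_eq_mulVec_eq_of_isCoprime η hη hη2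
  refine ⟨C * B, by rw [det_mul, hCdet, hBdet, one_mul], fun j => ?_, ?_⟩
  · rw [← hηB, ← hC0]
    rfl
  · rw [← mulVec_mulVec, hBX, hCe]
end

section
/- For every integer n ≥ 2, the determinant of the matrix M_n equals (−1)^{n−1}. In particular M_n is unimodular. -/
/-- The intersection-form matrix `M_n`: the symmetric tridiagonal integer matrix of size
`(2n-2) × (2n-2)` with diagonal `-2, …, -2` (`n-2` times), `0`, `2, …, 2` (`n-1` times)
and superdiagonal `1, …, 1` (`n-2` times), `-1, …, -1` (`n-1` times). -/
def Mn (n : ℕ) : Matrix (Fin (2 * n - 2)) (Fin (2 * n - 2)) ℤ :=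
  Matrix.of fun i j =>
    if (i : ℕ) = (j : ℕ) then
      (if (i : ℕ) < n - 2 then -2 else if (i : ℕ) = n - 2 then 0 else 2)
    else if (i : ℕ) + 1 = (j : ℕ) then (if (i : ℕ) < n - 2 then 1 else -1)
    else if (j : ℕ) + 1 = (i : ℕ) then (if (j : ℕ) < n - 2 then 1 else -1)
    else 0

/-- The entry function of `Mn`, as a function of natural-number indices. -/
def ee (n i j : ℕ) : ℤ :=
  if i = j then
    (if i < n - 2 then -2 else if i = n - 2 then 0 else 2)
  else if i + 1 = j then (if i < n - 2 then 1 else -1)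
  else if j + 1 = i then (if j < n - 2 then 1 else -1)
  else 0

/-- The `k × k` trailing block of the tridiagonal matrix, starting at offset `m`. -/
def TT (n m k : ℕ) : Matrix (Fin k) (Fin k) ℤ :=
  Matrix.of fun i j => ee n ((i : ℕ) + m) ((j : ℕ) + m)

/-- The value of the determinant of the trailing block starting at offset `m`. -/
def vv (n m : ℕ) : ℤ :=
  if n ≤ m + 1 then 2 * (n : ℤ) - 1 - m else (-1) ^ (n - 1 - m) * (m + 1)

lemma TT_apply (n m k : ℕ) (i j : Fin k) : TT n m k i j = ee n ((i:ℕ)+m) ((j:ℕ)+m) := rfl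

lemma ee_far {n i j : ℕ} (h : j + 2 ≤ i ∨ i + 2 ≤ j) : ee n i j = 0 := by
  unfold ee
  rw [if_neg (by omega), if_neg (by omega), if_neg (by omega)]

lemma ee_diag (n i : ℕ) : ee n i i = if i < n - 2 then -2 else if i = n - 2 then 0 else 2 := by
  unfold ee; rw [if_pos rfl]

lemma ee_sup (n i : ℕ) : ee n i (i + 1) = if i < n - 2 then 1 else -1 := by
  unfold ee; rw [if_neg (by omega), if_pos rfl]

lemma ee_sub (n i : ℕ) : ee n (i + 1) i = if i < n - 2 then 1 else -1 := by
  unfold ee; rw [if_neg (by omega), if_neg (by omega), if_pos rfl]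

/-- The three-term recurrence for tridiagonal determinants (Laplace expansion
along the first row, then along the first column of the second minor). -/
lemma det_step (n m k : ℕ) :
    (TT n m (k + 2)).det =
      ee n m m * (TT n (m + 1) (k + 1)).det -
        ee n m (m + 1) * (ee n (m + 1) m * (TT n (m + 2) k).det) := by
  rw [Matrix.det_succ_row_zero, Fin.sum_univ_succ, Fin.sum_univ_succ]
  have hrest : ∀ j : Fin k,
      (-1 : ℤ) ^ ((j.succ.succ : Fin (k+2)) : ℕ) * (TT n m (k+2)) 0 j.succ.succ *
        ((TT n m (k+2)).submatrix Fin.succ (j.succ.succ).succAbove).det = 0 := by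
    intro j
    have : (TT n m (k+2)) 0 j.succ.succ = 0 := by
      rw [TT_apply, ee_far]
      right; simp; omega
    rw [this]; ring
  rw [Finset.sum_congr rfl (fun j _ => hrest j), Finset.sum_const_zero]
  have h00 : (TT n m (k+2)) 0 0 = ee n m m := by rw [TT_apply]; norm_num
  have h01 : (TT n m (k+2)) 0 1 = ee n m (m+1) := by
    rw [TT_apply]; congr 1 <;> simp [Nat.add_comm]
  have hsub0 : (TT n m (k+2)).submatrix Fin.succ ((0 : Fin (k+2)).succAbove) = TT n (m+1) (k+1) := by
    ext i j
    rw [Fin.succAbove_zero, Matrix.submatrix_apply, TT_apply, TT_apply]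
    congr 1 <;> simp <;> omega
  have hsub1 : ((TT n m (k+2)).submatrix Fin.succ ((1 : Fin (k+2)).succAbove)).det =
      ee n (m+1) m * (TT n (m+2) k).det := by
    rw [Matrix.det_succ_column_zero, Fin.sum_univ_succ]
    have hrest2 : ∀ i : Fin k,
        (-1 : ℤ) ^ ((i.succ : Fin (k+1)) : ℕ) *
          ((TT n m (k+2)).submatrix Fin.succ ((1 : Fin (k+2)).succAbove)) i.succ 0 *
          ((((TT n m (k+2)).submatrix Fin.succ ((1 : Fin (k+2)).succAbove))).submatrix
            (i.succ).succAbove Fin.succ).det = 0 := by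
      intro i
      have : ((TT n m (k+2)).submatrix Fin.succ ((1 : Fin (k+2)).succAbove)) i.succ 0 = 0 := by
        rw [Matrix.submatrix_apply, TT_apply, ee_far]
        left
        have h1 : (((1 : Fin (k+2)).succAbove 0) : ℕ) = 0 := by
          simp [Fin.succAbove, Fin.lt_def]
        simp [h1]
        omega
      rw [this]; ring
    rw [Finset.sum_congr rfl (fun i _ => hrest2 i), Finset.sum_const_zero, add_zero]
    have hA : ((TT n m (k+2)).submatrix Fin.succ ((1 : Fin (k+2)).succAbove)) 0 0 = ee n (m+1) m := by
      rw [Matrix.submatrix_apply, TT_apply]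
      have h1 : (((1 : Fin (k+2)).succAbove 0) : ℕ) = 0 := by
        simp [Fin.succAbove, Fin.lt_def]
      congr 1 <;> simp [h1] <;> omega
    have hB : (((TT n m (k+2)).submatrix Fin.succ ((1 : Fin (k+2)).succAbove))).submatrix
        ((0 : Fin (k+1)).succAbove) Fin.succ = TT n (m+2) k := by
      ext i j
      have h2 : ((1 : Fin (k+2)).succAbove j.succ) = j.succ.succ := by
        rw [← Fin.succ_zero_eq_one, Fin.succ_succAbove_succ, Fin.succAbove_zero]
      rw [Fin.succAbove_zero, Matrix.submatrix_apply, Matrix.submatrix_apply, h2, TT_apply, TT_apply]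
      congr 1 <;> simp <;> omega
    rw [hA, hB]
    simp
  rw [Fin.succ_zero_eq_one] at *
  rw [h00, h01, hsub0, hsub1]
  simp
  ring

/-- Determinants of all trailing blocks of `M_n`. -/
lemma main_lemma (n : ℕ) (hn : 2 ≤ n) :
    ∀ k m, m + k = 2 * n - 2 → (TT n m k).det = vv n m := by
  intro k
  induction k using Nat.strong_induction_on with
  | _ k ih =>
    match k, ih with
    | 0, _ =>
      intro m hm
      rw [Matrix.det_fin_zero, vv, if_pos (by omega)]
      have : m = 2 * n - 2 := by omega
      subst this
      push_cast [Nat.cast_sub (by omega : 2 ≤ 2 * n)]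
      ring
    | 1, _ =>
      intro m hm
      rw [Matrix.det_fin_one, TT_apply, vv, if_pos (by omega)]
      have h0 : ((0 : Fin 1) : ℕ) = 0 := rfl
      rw [h0]
      rw [ee_diag, if_neg (by omega), if_neg (by omega)]
      have : m = 2 * n - 3 := by omega
      subst this
      push_cast [Nat.cast_sub (by omega : 3 ≤ 2 * n)]
      ring
    | (k+2), ih =>
      intro m hm
      rw [det_step, ih (k+1) (by omega) (m+1) (by omega), ih k (by omega) (m+2) (by omega),
        ee_diag, ee_sup, ee_sub]
      rcases lt_trichotomy m (n-2) with h | h | h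
      · rw [if_pos h, if_pos h]
        rcases eq_or_lt_of_le (by omega : m + 1 ≤ n - 2) with h1 | h1
        · rw [vv, if_neg (by omega), vv, if_pos (by omega), vv, if_neg (by omega)]
          have e1 : n - 1 - (m+1) = 1 := by omega
          have e2 : n - 1 - m = 2 := by omega
          rw [e1, e2]
          push_cast [Nat.cast_sub (by omega : m + 2 ≤ 2*n)]
          have : (m : ℤ) = n - 3 := by omega
          rw [this]; ring
        · rw [vv, if_neg (by omega), vv, if_neg (by omega), vv, if_neg (by omega)]
          have e0 : n - 1 - m = (n - 3 - m) + 2 := by omega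
          have e1 : n - 1 - (m+1) = (n - 3 - m) + 1 := by omega
          have e2 : n - 1 - (m+2) = n - 3 - m := by omega
          rw [e0, e1, e2, pow_succ, pow_succ]
          push_cast
          ring
      · rw [if_neg (by omega), if_pos (by omega), if_neg (by omega)]
        rw [vv, if_pos (by omega), vv, if_pos (by omega), vv, if_neg (by omega)]
        have e1 : n - 1 - m = 1 := by omega
        rw [e1, pow_one]
        push_cast
        omega
      · rw [if_neg (by omega), if_neg (by omega), if_neg (by omega)]
        rw [vv, if_pos (by omega), vv, if_pos (by omega), vv, if_pos (by omega)]
        push_cast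
        ring

/-- `det M_n = (-1)^(n-1)`; in particular `M_n` is unimodular. -/
theorem stmt_9 (n : ℕ) (hn : 2 ≤ n) : (Mn n).det = (-1) ^ (n - 1) := by
  have hM : Mn n = TT n 0 (2 * n - 2) := rfl
  rw [hM, main_lemma n hn (2 * n - 2) 0 (by omega), vv, if_neg (by omega)]
  simp
end

section
/- For every integer n ≥ 2, the matrix M_n is congruent over ℚ to a diagonal matrix: there exists an invertible rational (2n−2)×(2n−2) matrix P such that Pᵀ M_n P is the diagonal matrix with diagonal entries, in order: −(k+1)/k for k = 1, 2, …, n−2 (i.e. −2, −3/2, −4/3, …, −(n−1)/(n−2)), then k/(k+1) for k = n−2, n−3, …, 1 (i.e. (n−2)/(n−1), (n−3)/(n−2), …, 1/2), then −1/2, then 2. -/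
/-!
Symmetric Gaussian elimination of `M_n` from the top left, with `m = n - 2`, has pivots
`d 0 = -2` and `d (k + 1) = a (k + 1) - 1 / d k`, where `a` is the diagonal (the off-diagonal
entries are `±1`). They are `-(k + 2) / (k + 1)` for `k < m` and `(2m - k) / (2m + 1 - k)` for
`m ≤ k ≤ 2m`, so `d (2m) = 0`: elimination stops there, leaving the block `[[0, -1], [-1, 2]]`
on the last two coordinates, which a transvection turns into `diag (-1/2, 2)`. Thus
`M_n = L D Lᵀ` with `L` a unit lower bidiagonal matrix times a transvection, so `det L = 1`,
and `P = (Lᵀ)⁻¹`.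
-/

open Matrix

theorem exists_isUnit_transpose_mul_mul_eq_of_eq_mul_mul_transpose {n R : Type*} [Fintype n]
    [DecidableEq n] [CommRing R] {M D L : Matrix n n R} (hL : IsUnit L) (hM : M = L * D * Lᵀ) :
    ∃ P : Matrix n n R, IsUnit P ∧ Pᵀ * M * P = D := by
  obtain ⟨u, rfl⟩ := hL
  set U : Matrix n n R := ↑u
  set V : Matrix n n R := ↑u⁻¹
  have hVU : V * U = 1 := u.inv_mul
  refine ⟨Vᵀ, (isUnit_transpose _).mpr (Units.isUnit _), ?_⟩
  calc Vᵀᵀ * M * Vᵀ = V * U * D * (V * U)ᵀ := by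
        simp only [hM, transpose_transpose, transpose_mul, Matrix.mul_assoc]
    _ = D := by simp [hVU]

def tridiagonal {R : Type*} [Zero R] (N : ℕ) (a b : ℕ → R) : Matrix (Fin N) (Fin N) R :=
  of fun i j =>
    if (i : ℕ) = j then a i
    else if (i : ℕ) + 1 = j then b i
    else if (j : ℕ) + 1 = i then b j
    else 0

theorem tridiagonal_congr {R : Type*} [Zero R] {N : ℕ} {a a' b b' : ℕ → R}
    (ha : ∀ k < N, a k = a' k) (hb : ∀ k, k + 1 < N → b k = b' k) :
    tridiagonal N a b = tridiagonal N a' b' := by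
  ext i j
  simp only [tridiagonal, of_apply]
  split_ifs <;> first | rfl | exact ha _ (by omega) | exact hb _ (by omega)

theorem tridiagonal_eq_add_single {R : Type*} [AddZeroClass R] {N : ℕ} (a b : ℕ → R)
    {i j : Fin N} (hij : (i : ℕ) + 1 = j) :
    tridiagonal N a b = tridiagonal N a (Function.update b i 0) + single i j (b i) +
      single j i (b i) := by
  ext p q
  simp only [tridiagonal, of_apply, Matrix.add_apply, single_apply, Function.update_apply,
    Fin.ext_iff]
  split_ifs <;> first | omega | simp only [add_zero, zero_add] <;> first | rfl | congr 1

theorem sum_ite_val_add_one_eq {M : Type*} [AddCommMonoid M] {N : ℕ} (f : Fin N → M)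
    (i : Fin N) :
    ∑ k : Fin N, (if (k : ℕ) + 1 = i then f k else 0) =
      if h : (i : ℕ) = 0 then 0 else f ⟨i - 1, by omega⟩ := by
  split_ifs with h
  · exact Finset.sum_eq_zero fun k _ => if_neg (by omega)
  · rw [Finset.sum_eq_single_of_mem ⟨i - 1, by omega⟩ (Finset.mem_univ _)]
    · simp only [if_pos (show (i : ℕ) - 1 + 1 = i by omega)]
    · intro k _ hk
      exact if_neg fun h' => hk (Fin.ext (by simp; omega))

section UnitLowerBidiagonal

variable {R : Type*} [CommRing R]

def unitLowerBidiagonal (N : ℕ) (l : ℕ → R) : Matrix (Fin N) (Fin N) R :=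
  of fun i j => if (i : ℕ) = j then 1 else if (j : ℕ) + 1 = i then l j else 0

theorem unitLowerBidiagonal_mul_diagonal_mul_transpose (N : ℕ) (l d : ℕ → R) :
    unitLowerBidiagonal N l * diagonal (fun i : Fin N => d i) * (unitLowerBidiagonal N l)ᵀ =
      tridiagonal N (fun k => d k + if k = 0 then 0 else l (k - 1) ^ 2 * d (k - 1))
        (fun k => l k * d k) := by
  set S : Matrix (Fin N) (Fin N) R := of fun i j => if (j : ℕ) + 1 = i then l j else 0
  have hL : unitLowerBidiagonal N l = 1 + S := by
    ext i j
    simp only [unitLowerBidiagonal, S, of_apply, Matrix.add_apply, one_apply, Fin.ext_iff]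
    split_ifs <;> first | omega | ring
  have hSDS : ∀ i j,
      (S * diagonal (fun i : Fin N => d i) * Sᵀ) i j = ∑ k, S i k * d k * S j k := by
    intro i j
    rw [mul_apply]
    simp only [mul_diagonal, transpose_apply]
  ext i j
  rw [hL]
  simp only [transpose_add, transpose_one, Matrix.add_mul, Matrix.mul_add, Matrix.one_mul,
    Matrix.mul_one, Matrix.add_apply, hSDS, mul_diagonal, diagonal_mul, transpose_apply]
  simp only [S, of_apply, ite_mul, zero_mul, sum_ite_val_add_one_eq, tridiagonal, diagonal_apply,
    Fin.ext_iff]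
  split_ifs <;> first | omega | ring

theorem det_unitLowerBidiagonal (N : ℕ) (l : ℕ → R) : (unitLowerBidiagonal N l).det = 1 := by
  rw [det_of_isLowerTriangular _ fun i j (hij : j > i) => ?_]
  · simp [unitLowerBidiagonal]
  · have : (i : ℕ) < j := hij
    simp only [unitLowerBidiagonal, of_apply]
    rw [if_neg (by omega), if_neg (by omega)]

theorem unitLowerBidiagonal_mul_single {N : ℕ} {l : ℕ → R} {i : Fin N} (hi : l i = 0)
    (j : Fin N) (c : R) : unitLowerBidiagonal N l * single i j c = single i j c := by
  ext p q
  by_cases hq : q = j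
  · subst hq
    simp only [mul_single_apply_same, unitLowerBidiagonal, of_apply, single_apply, Fin.ext_iff,
      and_true]
    split_ifs <;> first | omega | simp [hi]
  · simp [hq, Ne.symm hq]

theorem unitLowerBidiagonal_mul_single_mul_transpose {N : ℕ} {l : ℕ → R} {i j : Fin N}
    (hi : l i = 0) (hj : l j = 0) (c : R) :
    unitLowerBidiagonal N l * single i j c * (unitLowerBidiagonal N l)ᵀ = single i j c := by
  rw [unitLowerBidiagonal_mul_single hi, ← transpose_transpose (single i j c), ← transpose_mul,
    transpose_single, unitLowerBidiagonal_mul_single hj, transpose_single]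

end UnitLowerBidiagonal

theorem transvection_mul_diagonal_mul_transpose {R n : Type*} [CommRing R] [Fintype n]
    [DecidableEq n] {i j : n} (hij : i ≠ j) (c : R) (d : n → R) :
    transvection i j c * diagonal d * (transvection i j c)ᵀ =
      diagonal (Function.update d i (d i + c ^ 2 * d j)) + single i j (c * d j) +
        single j i (c * d j) := by
  simp only [transvection, transpose_add, transpose_one, transpose_single, Matrix.add_mul,
    Matrix.mul_add, Matrix.one_mul, Matrix.mul_one]
  ext p q
  simp only [Matrix.add_apply, diagonal_mul, mul_diagonal, single_mul_mul_single]
  simp only [diagonal_apply, single_apply, Function.update_apply]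
  have hcases : ∀ x : n, x = i ∨ x = j ∨ (x ≠ i ∧ i ≠ x ∧ x ≠ j ∧ j ≠ x) := by
    tauto
  rcases hcases p with rfl | rfl | hp <;> rcases hcases q with rfl | rfl | hq <;> clear hcases <;>
    simp [hij.symm, *] <;> ring

def mnDiag (m k : ℕ) : ℚ := if k < m then -2 else if k = m then 0 else 2

def mnOffDiag (m k : ℕ) : ℚ := if k < m then 1 else -1

-- `pivot m (2 * m) = 0`; past it stands the last diagonal entry, which elimination leaves alone.
def pivot (m k : ℕ) : ℚ :=
  if k < m then -(k + 2) / (k + 1) else if k ≤ 2 * m then (2 * m - k) / (2 * m + 1 - k) else 2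

def multiplier (m k : ℕ) : ℚ := if k < 2 * m then mnOffDiag m k / pivot m k else 0

theorem Mn_map_intCast (n : ℕ) :
    (Mn n).map (Int.cast : ℤ → ℚ) =
      tridiagonal (2 * n - 2) (mnDiag (n - 2)) (mnOffDiag (n - 2)) := by
  ext i j
  simp only [Mn, map_apply, of_apply, tridiagonal, mnDiag, mnOffDiag]
  split_ifs <;> norm_num

theorem pivot_ne_zero {m k : ℕ} (hk : k < 2 * m) : pivot m k ≠ 0 := by
  have hk' : (k : ℚ) + 1 ≤ 2 * m := by exact_mod_cast hk
  unfold pivot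
  split_ifs
  · exact div_ne_zero (neg_ne_zero.mpr (by positivity)) (by positivity)
  · exact div_ne_zero (by linarith) (by linarith)
  · norm_num

theorem pivot_zero (m : ℕ) : pivot m 0 = mnDiag m 0 := by
  rcases Nat.eq_zero_or_pos m with rfl | hm
  · norm_num [pivot, mnDiag]
  · simp [pivot, mnDiag, hm]

theorem pivot_succ_add_inv {m k : ℕ} (hk : k < 2 * m) :
    pivot m (k + 1) + (pivot m k)⁻¹ = mnDiag m (k + 1) := by
  have hk' : (k : ℚ) + 1 ≤ 2 * m := by exact_mod_cast hk
  rcases lt_trichotomy (k + 1) m with h | h | h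
  · have h' : k < m := by omega
    simp only [pivot, mnDiag, if_pos h, if_pos h']
    push_cast
    field_simp
    ring
  · subst h
    simp only [pivot, mnDiag, lt_irrefl, if_false, if_true, lt_add_one]
    rw [if_pos (by omega)]
    push_cast
    rw [show 2 * ((k : ℚ) + 1) - (k + 1) = k + 1 by ring,
      show 2 * ((k : ℚ) + 1) + 1 - (k + 1) = k + 2 by ring]
    field_simp
    ring
  · simp only [pivot, mnDiag, if_neg (show ¬k + 1 < m by omega), if_neg (show ¬k < m by omega),
      if_pos (show k + 1 ≤ 2 * m by omega), if_pos hk.le, if_neg (show k + 1 ≠ m by omega)]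
    have h1 : 2 * (m : ℚ) - k ≠ 0 := by linarith
    have h2 : 2 * (m : ℚ) + 1 - k ≠ 0 := by linarith
    have h3 : 2 * (m : ℚ) + 1 - (k + 1) ≠ 0 := by linarith
    push_cast
    field_simp
    ring

theorem multiplier_mul_pivot {m k : ℕ} (hk : k ≤ 2 * m) :
    multiplier m k * pivot m k = Function.update (mnOffDiag m) (2 * m) 0 k := by
  rcases hk.lt_or_eq with hk | rfl
  · rw [multiplier, if_pos hk, div_mul_cancel₀ _ (pivot_ne_zero hk),
      Function.update_of_ne hk.ne]
  · simp [multiplier]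

theorem pivot_add_multiplier_sq_mul_pivot {m k : ℕ} (hk : k ≤ 2 * m + 1) :
    pivot m k + (if k = 0 then 0 else multiplier m (k - 1) ^ 2 * pivot m (k - 1)) =
      mnDiag m k := by
  rcases k with _ | k
  · simp [pivot_zero]
  · rw [if_neg k.succ_ne_zero, Nat.add_sub_cancel]
    rcases (Nat.lt_succ_iff.mp hk).lt_or_eq with hk | rfl
    · have hsq : mnOffDiag m k ^ 2 = 1 := by unfold mnOffDiag; split_ifs <;> norm_num
      rw [multiplier, if_pos hk, div_pow, hsq, ← pivot_succ_add_inv hk]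
      field_simp [pivot_ne_zero hk]
    · simp [multiplier, pivot, mnDiag, show ¬2 * m + 1 < m by omega,
        show 2 * m + 1 ≠ m by omega]

def congruentDiag (m k : ℕ) : ℚ := if k = 2 * m then -1 / 2 else pivot m k

theorem Mn_map_intCast_eq_unitLowerBidiagonal_mul {n : ℕ} {i₀ i₁ : Fin (2 * n - 2)}
    (h₀ : (i₀ : ℕ) = 2 * (n - 2)) (h₁ : (i₁ : ℕ) = 2 * (n - 2) + 1) :
    (Mn n).map (Int.cast : ℤ → ℚ) =
      unitLowerBidiagonal (2 * n - 2) (multiplier (n - 2)) *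
        (diagonal (fun i : Fin (2 * n - 2) => pivot (n - 2) i) + single i₀ i₁ (-1) +
          single i₁ i₀ (-1)) *
        (unitLowerBidiagonal (2 * n - 2) (multiplier (n - 2)))ᵀ := by
  have hl₀ : multiplier (n - 2) i₀ = 0 := by simp [multiplier, h₀]
  have hl₁ : multiplier (n - 2) i₁ = 0 := by simp [multiplier, h₁]
  have hb : mnOffDiag (n - 2) i₀ = -1 := if_neg (by omega)
  rw [Mn_map_intCast, tridiagonal_eq_add_single _ _ (show (i₀ : ℕ) + 1 = i₁ by omega), hb,
    Matrix.mul_add, Matrix.mul_add, Matrix.add_mul, Matrix.add_mul,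
    unitLowerBidiagonal_mul_diagonal_mul_transpose,
    unitLowerBidiagonal_mul_single_mul_transpose hl₀ hl₁,
    unitLowerBidiagonal_mul_single_mul_transpose hl₁ hl₀, h₀]
  congr 2
  exact tridiagonal_congr (fun k hk => (pivot_add_multiplier_sq_mul_pivot (by omega)).symm)
    (fun k hk => (multiplier_mul_pivot (by omega)).symm)

theorem transvection_mul_diagonal_congruentDiag_mul_transpose {n : ℕ}
    {i₀ i₁ : Fin (2 * n - 2)} (h₀ : (i₀ : ℕ) = 2 * (n - 2)) (h₁ : (i₁ : ℕ) = 2 * (n - 2) + 1) :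
    transvection i₀ i₁ (-1 / 2 : ℚ) *
        diagonal (fun i : Fin (2 * n - 2) => congruentDiag (n - 2) i) *
        (transvection i₀ i₁ (-1 / 2 : ℚ))ᵀ =
      diagonal (fun i : Fin (2 * n - 2) => pivot (n - 2) i) + single i₀ i₁ (-1) +
        single i₁ i₀ (-1) := by
  have hD₁ : congruentDiag (n - 2) i₁ = 2 := by
    simp [congruentDiag, pivot, h₁, show ¬2 * (n - 2) + 1 < n - 2 by omega]
  have hpivot : Function.update (fun i : Fin (2 * n - 2) => congruentDiag (n - 2) i) i₀
      (congruentDiag (n - 2) i₀ + (-1 / 2) ^ 2 * 2) =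
        fun i : Fin (2 * n - 2) => pivot (n - 2) i := by
    funext i
    rcases eq_or_ne i i₀ with rfl | h
    · simp [congruentDiag, pivot, h₀, show ¬2 * (n - 2) < n - 2 by omega]
      norm_num
    · rw [Function.update_of_ne h, congruentDiag, if_neg (fun h' => h (Fin.ext (by omega)))]
  rw [transvection_mul_diagonal_mul_transpose (Fin.ne_of_val_ne (by omega)), hD₁, hpivot]
  norm_num

theorem Mn_map_intCast_eq_mul_diagonal_mul_transpose {n : ℕ} (hn : 2 ≤ n) :
    ∃ L : Matrix (Fin (2 * n - 2)) (Fin (2 * n - 2)) ℚ, IsUnit L ∧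
      (Mn n).map (Int.cast : ℤ → ℚ) =
        L * diagonal (fun i : Fin (2 * n - 2) => congruentDiag (n - 2) i) * Lᵀ := by
  let i₀ : Fin (2 * n - 2) := ⟨2 * (n - 2), by omega⟩
  let i₁ : Fin (2 * n - 2) := ⟨2 * (n - 2) + 1, by omega⟩
  have h₀ : (i₀ : ℕ) = 2 * (n - 2) := rfl
  have h₁ : (i₁ : ℕ) = 2 * (n - 2) + 1 := rfl
  refine ⟨unitLowerBidiagonal _ (multiplier (n - 2)) * transvection i₀ i₁ (-1 / 2),
    (isUnit_iff_isUnit_det _).2 ?_, ?_⟩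
  · simp [det_unitLowerBidiagonal, det_transvection_of_ne i₀ i₁ (Fin.ne_of_val_ne (by omega))]
  · rw [Mn_map_intCast_eq_unitLowerBidiagonal_mul h₀ h₁,
      ← transvection_mul_diagonal_congruentDiag_mul_transpose h₀ h₁]
    simp only [transpose_mul, Matrix.mul_assoc]

theorem congruentDiag_eq {n k : ℕ} (hk : k < 2 * n - 2) :
    congruentDiag (n - 2) k =
      if k < n - 2 then -((k + 2 : ℚ)) / ((k + 1 : ℚ))
      else if k < 2 * n - 4 then ((2 * n - 4 - k : ℕ) : ℚ) / ((2 * n - 3 - k : ℕ) : ℚ)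
      else if k = 2 * n - 4 then -1 / 2
      else 2 := by
  obtain ⟨m, rfl⟩ : ∃ m, n = m + 2 := ⟨n - 2, by omega⟩
  rw [Nat.add_sub_cancel, show 2 * (m + 2) - 4 = 2 * m by omega,
    show 2 * (m + 2) - 3 - k = 2 * m + 1 - k by omega]
  unfold congruentDiag pivot
  rcases lt_or_ge k m with h₁ | h₁
  · simp [h₁, show k ≠ 2 * m by omega]
  rcases lt_trichotomy k (2 * m) with h₂ | rfl | h₂
  · simp only [show k ≠ 2 * m by omega, show ¬k < m by omega, h₂, h₂.le, if_true, if_false]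
    rw [Nat.cast_sub h₂.le, Nat.cast_sub (by omega)]
    push_cast
    ring
  · simp [show ¬2 * m < m by omega]
  · simp [show k ≠ 2 * m by omega, show ¬k < m by omega, show ¬k ≤ 2 * m by omega,
      show ¬k < 2 * m by omega]

/-- `M_n` is congruent over `ℚ` to the diagonal matrix with entries
`-2, -3/2, …, -(n-1)/(n-2)`, then `(n-2)/(n-1), …, 1/2`, then `-1/2`, then `2`. -/
theorem stmt_10 (n : ℕ) (hn : 2 ≤ n) :
    ∃ P : Matrix (Fin (2 * n - 2)) (Fin (2 * n - 2)) ℚ, IsUnit P ∧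
      P.transpose * (Mn n).map (Int.cast : ℤ → ℚ) * P =
        Matrix.diagonal (fun i : Fin (2 * n - 2) =>
          if (i : ℕ) < n - 2 then -(((i : ℕ) + 2 : ℚ)) / (((i : ℕ) + 1 : ℚ))
          else if (i : ℕ) < 2 * n - 4 then
            ((2 * n - 4 - (i : ℕ) : ℕ) : ℚ) / ((2 * n - 3 - (i : ℕ) : ℕ) : ℚ)
          else if (i : ℕ) = 2 * n - 4 then -1 / 2
          else 2) := by
  obtain ⟨L, hL, hM⟩ := Mn_map_intCast_eq_mul_diagonal_mul_transpose hn
  obtain ⟨P, hP, hPMP⟩ := exists_isUnit_transpose_mul_mul_eq_of_eq_mul_mul_transpose hL hM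
  exact ⟨P, hP, hPMP.trans (congrArg diagonal (funext fun i => congruentDiag_eq i.isLt))⟩
end

section
/- For every integer n ≥ 2, the symmetric matrix M_n, viewed as a real matrix, has signature zero: there exists an invertible real (2n−2)×(2n−2) matrix P such that Pᵀ M_n P is the diagonal matrix whose first n−1 diagonal entries equal −1 and whose last n−1 diagonal entries equal +1. -/
namespace Stmt11

open Finset

noncomputable def eF (n k : ℕ) : ℝ := if k < n - 1 then -1 else 1

noncomputable def bF (n k i : ℕ) : ℝ :=
  if k < n - 2 then (if i = k then 1 else if i = k + 1 then -1 else 0)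
  else if k = n - 2 then 0
  else (if i + 1 = k then 1 else if i = k then -1 else 0)

noncomputable def cF (n k : ℕ) : ℝ := if k ≤ n - 2 then 1/2 else -1/2

noncomputable def rF (n i : ℕ) : ℝ := (if i = 0 then 1 else 0) + (if i = 2*n - 3 then 1 else 0)

noncomputable def LF (n k i : ℕ) : ℝ := bF n k i + cF n k * rF n i

noncomputable def PF (n i k : ℕ) : ℝ :=
  if k < n - 2 then (if i ≤ k then 1 else 0) - 1/2
  else if k = n - 2 then
    (2*(n:ℝ) - 1)/2 - (if i ≤ n - 2 then ((n:ℝ) - 2 - (i:ℝ)) else ((i:ℝ) - ((n:ℝ) - 2)))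
  else 1/2 - (if k ≤ i then 1 else 0)


noncomputable def MF (n i j : ℕ) : ℝ :=
  if i = j then (if i < n - 2 then -2 else if i = n - 2 then 0 else 2)
  else if i + 1 = j then (if i < n - 2 then 1 else -1)
  else if j + 1 = i then (if j < n - 2 then 1 else -1) else 0

lemma sum_two {f : ℕ → ℝ} {m a b : ℕ} (hab : a ≠ b) (ha : a < m) (hb : b < m)
    (h0 : ∀ k, k < m → k ≠ a → k ≠ b → f k = 0) :
    ∑ k ∈ range m, f k = f a + f b := by
  have hsub : ({a, b} : Finset ℕ) ⊆ range m := by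
    intro x hx; simp only [mem_insert, mem_singleton] at hx
    rcases hx with rfl | rfl <;> simp [mem_range, ha, hb]
  rw [← Finset.sum_subset hsub (fun x hx hxs => by
    simp only [mem_insert, mem_singleton, not_or] at hxs
    exact h0 x (mem_range.1 hx) hxs.1 hxs.2)]
  rw [Finset.sum_pair hab]

lemma sum_three {f : ℕ → ℝ} {m a b c : ℕ} (hab : a ≠ b) (hac : a ≠ c) (hbc : b ≠ c)
    (ha : a < m) (hb : b < m) (hc : c < m)
    (h0 : ∀ k, k < m → k ≠ a → k ≠ b → k ≠ c → f k = 0) :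
    ∑ k ∈ range m, f k = f a + f b + f c := by
  have hsub : ({a, b, c} : Finset ℕ) ⊆ range m := by
    intro x hx; simp only [mem_insert, mem_singleton] at hx
    rcases hx with rfl | rfl | rfl <;> simp [mem_range, ha, hb, hc]
  rw [← Finset.sum_subset hsub (fun x hx hxs => by
    simp only [mem_insert, mem_singleton, not_or] at hxs
    exact h0 x (mem_range.1 hx) hxs.1 hxs.2.1 hxs.2.2)]
  rw [Finset.sum_insert (by simp [hab, hac]), Finset.sum_pair hbc, ← add_assoc]

lemma rF_eq_zero {n i : ℕ} (h1 : i ≠ 0) (h2 : i ≠ 2*n - 3) : rF n i = 0 := by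
  simp [rF, h1, h2]

lemma bF_lt_zero {n k i : ℕ} (hk : k < n - 2) (h1 : i ≠ k) (h2 : i ≠ k + 1) :
    bF n k i = 0 := by
  unfold bF; rw [if_pos hk, if_neg h1, if_neg h2]

lemma bF_lt_self {n k : ℕ} (hk : k < n - 2) : bF n k k = 1 := by
  unfold bF; rw [if_pos hk, if_pos rfl]

lemma bF_lt_succ {n k : ℕ} (hk : k < n - 2) : bF n k (k + 1) = -1 := by
  unfold bF; rw [if_pos hk, if_neg (by omega), if_pos rfl]

lemma bF_mid {n i : ℕ} : bF n (n - 2) i = 0 := by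
  unfold bF; rw [if_neg (by omega), if_pos rfl]

lemma bF_gt_zero {n k i : ℕ} (hk : n - 2 < k) (h1 : i + 1 ≠ k) (h2 : i ≠ k) :
    bF n k i = 0 := by
  unfold bF; rw [if_neg (by omega), if_neg (by omega), if_neg h1, if_neg h2]

lemma bF_gt_pred {n k : ℕ} (hk : n - 2 < k) : bF n k (k - 1) = 1 := by
  unfold bF; rw [if_neg (by omega), if_neg (by omega), if_pos (by omega)]

lemma bF_gt_self {n k : ℕ} (hk : n - 2 < k) : bF n k k = -1 := by
  unfold bF; rw [if_neg (by omega), if_neg (by omega), if_neg (by omega), if_pos rfl]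

lemma PF_lo {n i j : ℕ} (hj : j < n - 2) : PF n i j = (if i ≤ j then 1 else 0) - 1/2 := by
  unfold PF; rw [if_pos hj]

lemma PF_hi {n i j : ℕ} (hj : n - 2 < j) : PF n i j = 1/2 - (if j ≤ i then 1 else 0) := by
  unfold PF; rw [if_neg (by omega), if_neg (by omega)]

lemma PF_mid_lo {n i : ℕ} (hi : i ≤ n - 2) :
    PF n i (n - 2) = (2*(n:ℝ) - 1)/2 - ((n:ℝ) - 2 - (i:ℝ)) := by
  unfold PF; rw [if_neg (by omega), if_pos rfl, if_pos hi]

lemma PF_mid_hi {n i : ℕ} (hi : n - 2 < i) :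
    PF n i (n - 2) = (2*(n:ℝ) - 1)/2 - ((i:ℝ) - ((n:ℝ) - 2)) := by
  unfold PF; rw [if_neg (by omega), if_pos rfl, if_neg (by omega)]

lemma cast_sub' {a b : ℕ} (h : b ≤ a) : ((a - b : ℕ) : ℝ) = (a:ℝ) - (b:ℝ) :=
  Nat.cast_sub h

lemma sum_rP {n j : ℕ} (hn : 2 ≤ n) (hj : j < 2*n - 2) :
    ∑ i ∈ range (2*n - 2), rF n i * PF n i j = if j = n - 2 then 2 else 0 := by
  rw [sum_two (f := fun i => rF n i * PF n i j) (a := 0) (b := 2*n - 3)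
      (by omega) (by omega) (by omega)
      (fun i _ h0 hN => by show rF n i * PF n i j = 0; rw [rF_eq_zero h0 hN, zero_mul])]
  beta_reduce
  have h03 : ¬((0:ℕ) = 2*n - 3) := by omega
  have hN0 : ¬(2*n - 3 = 0) := by omega
  have hr0 : rF n 0 = 1 := by simp [rF, h03]
  have hrN : rF n (2*n - 3) = 1 := by simp [rF, hN0]
  rw [hr0, hrN, one_mul, one_mul]
  have hcN : ((2*n - 3 : ℕ) : ℝ) = 2*(n:ℝ) - 3 := by
    rw [cast_sub' (by omega)]; push_cast; ring
  rcases lt_trichotomy j (n - 2) with h | h | h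
  · have h1 : ¬(2*n - 3 ≤ j) := by omega
    have h2 : ¬(j = n - 2) := by omega
    rw [PF_lo h, PF_lo h, if_pos (Nat.zero_le _), if_neg h1, if_neg h2]
    norm_num
  · subst h
    rw [PF_mid_lo (Nat.zero_le _), PF_mid_hi (by omega), if_pos rfl, hcN]
    push_cast
    ring
  · have h1 : ¬(j ≤ 0) := by omega
    have h2 : j ≤ 2*n - 3 := by omega
    have h3 : ¬(j = n - 2) := by omega
    rw [PF_hi h, PF_hi h, if_neg h1, if_pos h2, if_neg h3]
    norm_num

lemma key1 {n k j : ℕ} (hn : 2 ≤ n) (hk : k < 2*n - 2) (hj : j < 2*n - 2) :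
    ∑ i ∈ range (2*n - 2), LF n k i * PF n i j = if k = j then 1 else 0 := by
  have hsplit : ∑ i ∈ range (2*n - 2), LF n k i * PF n i j
      = (∑ i ∈ range (2*n - 2), bF n k i * PF n i j)
        + cF n k * ∑ i ∈ range (2*n - 2), rF n i * PF n i j := by
    rw [Finset.mul_sum, ← Finset.sum_add_distrib]
    exact Finset.sum_congr rfl fun i _ => by unfold LF; ring
  rw [hsplit, sum_rP hn hj]
  rcases lt_trichotomy k (n - 2) with hkc | hkc | hkc
  · -- k < n - 2
    rw [sum_two (f := fun i => bF n k i * PF n i j) (a := k) (b := k + 1)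
        (by omega) (by omega) (by omega)
        (fun i _ h1 h2 => by
          show bF n k i * PF n i j = 0; rw [bF_lt_zero hkc h1 h2, zero_mul])]
    beta_reduce
    rw [bF_lt_self hkc, bF_lt_succ hkc, one_mul]
    have hcF : cF n k = 1/2 := by unfold cF; rw [if_pos (by omega)]
    rw [hcF]
    rcases lt_trichotomy j (n - 2) with hjc | hjc | hjc
    · have h2 : ¬(j = n - 2) := by omega
      rw [PF_lo hjc, PF_lo hjc, if_neg h2]
      split_ifs <;> (try norm_num) <;> omega
    · subst hjc
      have h2 : ¬(k = n - 2) := by omega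
      rw [PF_mid_lo (by omega), PF_mid_lo (by omega), if_pos rfl, if_neg h2]
      push_cast
      ring
    · have h2 : ¬(j = n - 2) := by omega
      have h3 : ¬(j ≤ k) := by omega
      have h4 : ¬(j ≤ k + 1) := by omega
      have h5 : ¬(k = j) := by omega
      rw [PF_hi hjc, PF_hi hjc, if_neg h2, if_neg h3, if_neg h4, if_neg h5]
      norm_num
  · -- k = n - 2
    subst hkc
    rw [Finset.sum_eq_zero (fun i _ => by
      show bF n (n - 2) i * PF n i j = 0; rw [bF_mid, zero_mul])]
    have hcF : cF n (n - 2) = 1/2 := by unfold cF; rw [if_pos le_rfl]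
    rw [hcF]
    split_ifs <;> (try norm_num) <;> omega
  · -- k > n - 2
    rw [sum_two (f := fun i => bF n k i * PF n i j) (a := k - 1) (b := k)
        (by omega) (by omega) (by omega)
        (fun i _ h1 h2 => by
          show bF n k i * PF n i j = 0; rw [bF_gt_zero hkc (by omega) h2, zero_mul])]
    beta_reduce
    rw [bF_gt_pred hkc, bF_gt_self hkc, one_mul]
    have hcF : cF n k = -(1/2) := by unfold cF; rw [if_neg (by omega)]; norm_num
    rw [hcF]
    rcases lt_trichotomy j (n - 2) with hjc | hjc | hjc
    · have h2 : ¬(j = n - 2) := by omega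
      have h3 : ¬(k - 1 ≤ j) := by omega
      have h4 : ¬(k ≤ j) := by omega
      have h5 : ¬(k = j) := by omega
      rw [PF_lo hjc, PF_lo hjc, if_neg h2, if_neg h3, if_neg h4, if_neg h5]
      norm_num
    · subst hjc
      have h5 : ¬(k = n - 2) := by omega
      rcases eq_or_lt_of_le (show n - 1 ≤ k by omega) with hk1 | hk1
      · have hk2 : k - 1 = n - 2 := by omega
        rw [hk2, PF_mid_lo le_rfl, PF_mid_hi (by omega), if_pos rfl, if_neg h5]
        have hck : ((k:ℕ) : ℝ) = (n:ℝ) - 1 := by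
          rw [show k = n - 1 from by omega, cast_sub' (by omega)]; push_cast; ring
        have hcn2 : ((n - 2 : ℕ) : ℝ) = (n:ℝ) - 2 := by
          rw [cast_sub' (by omega)]; push_cast; ring
        rw [hck, hcn2]
        ring
      · rw [PF_mid_hi (by omega : n - 2 < k - 1), PF_mid_hi (by omega), if_pos rfl, if_neg h5]
        have hck : ((k - 1 : ℕ) : ℝ) = (k:ℝ) - 1 := by
          rw [cast_sub' (by omega)]; push_cast; ring
        rw [hck]
        ring
    · have h2 : ¬(j = n - 2) := by omega
      rw [PF_hi hjc, PF_hi hjc, if_neg h2]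
      split_ifs <;> (try norm_num) <;> omega


-- additions to be appended before `end Stmt11`
lemma eF_lt {n k : ℕ} (h : k < n - 1) : eF n k = -1 := by unfold eF; rw [if_pos h]
lemma eF_ge {n k : ℕ} (h : ¬ k < n - 1) : eF n k = 1 := by unfold eF; rw [if_neg h]

lemma bF_eq_zero {n k i : ℕ} (h1 : i ≠ k) (h2 : i ≠ k + 1) (h3 : i + 1 ≠ k) :
    bF n k i = 0 := by
  unfold bF; split_ifs <;> first | (exfalso; omega) | rfl

lemma bF_pred {n i : ℕ} (hi : 1 ≤ i) (h : i - 1 < n - 2) : bF n (i - 1) i = -1 := by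
  obtain ⟨k', rfl⟩ : ∃ k', i = k' + 1 := ⟨i - 1, by omega⟩
  rw [Nat.add_sub_cancel] at h ⊢
  exact bF_lt_succ h

lemma bF_pred_zero {n i : ℕ} (hi : 1 ≤ i) (h : n - 2 ≤ i - 1) : bF n (i - 1) i = 0 := by
  rcases eq_or_lt_of_le h with h' | h'
  · rw [← h']; exact bF_mid
  · exact bF_gt_zero h' (by omega) (by omega)

lemma bF_succ {n i : ℕ} (h : n - 2 < i + 1) : bF n (i + 1) i = 1 := by
  have h2 := bF_gt_pred (n := n) (k := i + 1) h
  rwa [Nat.add_sub_cancel] at h2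

lemma bF_succ_zero {n i : ℕ} (h : i + 1 ≤ n - 2) : bF n (i + 1) i = 0 := by
  rcases eq_or_lt_of_le h with h' | h'
  · rw [h']; exact bF_mid
  · exact bF_lt_zero h' (by omega) (by omega)

lemma sum_eF {n : ℕ} (hn : 2 ≤ n) : ∑ k ∈ range (2*n - 2), eF n k = 0 := by
  rw [← Finset.sum_range_add_sum_Ico _ (show n - 1 ≤ 2*n - 2 by omega)]
  have h1 : ∑ k ∈ range (n - 1), eF n k = -((n:ℝ) - 1) := by
    rw [Finset.sum_congr rfl (fun k hk => eF_lt (mem_range.1 hk))]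
    rw [Finset.sum_const, card_range, nsmul_eq_mul, cast_sub' (by omega)]
    push_cast; ring
  have h2 : ∑ k ∈ Finset.Ico (n - 1) (2*n - 2), eF n k = (n:ℝ) - 1 := by
    rw [Finset.sum_congr rfl (fun k hk => eF_ge (not_lt.mpr (Finset.mem_Ico.1 hk).1))]
    rw [Finset.sum_const, Nat.card_Ico, nsmul_eq_mul,
      show 2*n - 2 - (n - 1) = n - 1 from by omega, cast_sub' (by omega)]
    push_cast; ring
  rw [h1, h2]; ring

lemma sum_bF {n i : ℕ} (hn : 2 ≤ n) (hi : i < 2*n - 2) :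
    ∑ k ∈ range (2*n - 2), bF n k i
      = (if i = 0 then 1 else 0) - (if i = 2*n - 3 then 1 else 0) := by
  rcases Nat.eq_zero_or_pos i with rfl | hipos
  · -- i = 0
    rw [sum_two (f := fun k => bF n k 0) (a := 0) (b := 1)
        (by omega) (by omega) (by omega)
        (fun k _ h1 h2 => bF_eq_zero (by omega) (by omega) (by omega))]
    beta_reduce
    have h2 : ¬((0:ℕ) = 2*n - 3) := by omega
    rw [if_pos rfl, if_neg h2]
    rcases lt_trichotomy 1 (n - 2) with hc | hc | hc
    · rw [bF_lt_self (by omega), bF_lt_zero hc (by omega) (by omega)]; norm_num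
    · have e1 : bF n 1 0 = 0 := by rw [hc]; exact bF_mid
      rw [bF_lt_self (by omega), e1]; norm_num
    · -- n = 2
      have hn2 : n = 2 := by omega
      subst hn2
      rw [show (0:ℕ) = 2 - 2 from rfl, bF_mid, bF_succ (by omega)]
      norm_num
  · rcases lt_trichotomy i (2*n - 3) with hic | hic | hic
    · -- 1 ≤ i ≤ 2n-4
      rw [sum_three (f := fun k => bF n k i) (a := i - 1) (b := i) (c := i + 1)
          (by omega) (by omega) (by omega) (by omega) (by omega) (by omega)
          (fun k _ h1 h2 h3 => bF_eq_zero (by omega) (by omega) (by omega))]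
      beta_reduce
      have hz1 : ¬(i = 0) := by omega
      have hz2 : ¬(i = 2*n - 3) := by omega
      rw [if_neg hz1, if_neg hz2]
      rcases lt_trichotomy i (n - 2) with hc | hc | hc
      · rw [bF_pred hipos (by omega), bF_lt_self hc, bF_succ_zero (by omega)]; norm_num
      · rw [hc, bF_pred (by omega) (by omega), bF_mid, bF_succ (by omega)]; norm_num
      · rw [bF_pred_zero hipos (by omega), bF_gt_self hc, bF_succ (by omega)]; norm_num
    · -- i = 2n-3
      subst hic
      rw [sum_two (f := fun k => bF n k (2*n - 3)) (a := 2*n - 4) (b := 2*n - 3)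
          (by omega) (by omega) (by omega)
          (fun k _ h1 h2 => bF_eq_zero (by omega) (by omega) (by omega))]
      beta_reduce
      have e1 : bF n (2*n - 4) (2*n - 3) = 0 := by
        rw [show 2*n - 4 = (2*n - 3) - 1 from by omega]
        exact bF_pred_zero (by omega) (by omega)
      rw [e1, bF_gt_self (by omega), if_neg (by omega : ¬(2*n - 3 = 0)), if_pos rfl]
      norm_num
    · omega


lemma MF_symm {n i j : ℕ} : MF n j i = MF n i j := by
  unfold MF; split_ifs <;> first | (exfalso; omega) | rfl

lemma sum_ebb {n i j : ℕ} (hn : 2 ≤ n) (hi : i < 2*n - 2) (hj : j < 2*n - 2) (hij : i ≤ j) :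
    ∑ k ∈ range (2*n - 2), eF n k * bF n k i * bF n k j
      = MF n i j + (if i = 0 ∧ j = 0 then (1:ℝ) else 0)
          - (if i = 2*n - 3 ∧ j = 2*n - 3 then (1:ℝ) else 0) := by
  have c2false : ∀ {a b : ℕ}, a ≠ b → (if a = b ∧ True then (1:ℝ) else 0) = 0 := by
    intro a b h; simp [h]
  rcases eq_or_lt_of_le hij with rfl | hlt
  · -- diagonal i = j
    have cN0 : ¬((2*n - 3 : ℕ) = 0) := by omega
    rcases Nat.eq_zero_or_pos i with rfl | hipos
    · -- i = 0
      rw [sum_two (f := fun k => eF n k * bF n k 0 * bF n k 0) (a := 0) (b := 1)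
          (by omega) (by omega) (by omega)
          (fun k _ h1 h2 => by
            show eF n k * bF n k 0 * bF n k 0 = 0
            rw [bF_eq_zero (by omega) (by omega) (by omega)]; ring)]
      beta_reduce
      rw [if_pos ⟨rfl, rfl⟩, if_neg (by omega : ¬((0:ℕ) = 2*n - 3 ∧ (0:ℕ) = 2*n - 3))]
      rcases eq_or_lt_of_le hn with hn2 | hn3
      · -- n = 2
        have e0 : bF n 0 0 = 0 := by
          rw [show (0:ℕ) = n - 2 from by omega]; exact bF_mid
        have e1 : eF n 1 * bF n 1 0 * bF n 1 0 = 1 := by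
          rw [eF_ge (by omega), bF_succ (by omega)]; norm_num
        rw [e0, e1]
        have : MF n 0 0 = 0 := by
          unfold MF; rw [if_pos rfl, if_neg (by omega), if_pos (by omega)]
        rw [this]; ring
      · -- n ≥ 3
        have e0 : eF n 0 * bF n 0 0 * bF n 0 0 = -1 := by
          rw [eF_lt (by omega), bF_lt_self (by omega)]; norm_num
        have e1 : bF n 1 0 = 0 := by
          rcases lt_trichotomy 1 (n - 2) with hc | hc | hc
          · exact bF_lt_zero hc (by omega) (by omega)
          · rw [hc]; exact bF_mid
          · omega
        rw [e0, e1]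
        have : MF n 0 0 = -2 := by
          unfold MF; rw [if_pos rfl, if_pos (by omega)]
        rw [this]; ring
    · rcases lt_trichotomy i (2*n - 3) with hic | hic | hic
      · -- 1 ≤ i ≤ 2n-4
        rw [sum_three (f := fun k => eF n k * bF n k i * bF n k i)
            (a := i - 1) (b := i) (c := i + 1)
            (by omega) (by omega) (by omega) (by omega) (by omega) (by omega)
            (fun k _ h1 h2 h3 => by
              show eF n k * bF n k i * bF n k i = 0
              rw [bF_eq_zero (by omega) (by omega) (by omega)]; ring)]
        beta_reduce
        rw [if_neg (by omega : ¬(i = 0 ∧ i = 0)),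
          if_neg (by omega : ¬(i = 2*n - 3 ∧ i = 2*n - 3))]
        rcases lt_trichotomy i (n - 2) with hc | hc | hc
        · have e1 : eF n (i - 1) * bF n (i - 1) i * bF n (i - 1) i = -1 := by
            rw [eF_lt (by omega), bF_pred hipos (by omega)]; norm_num
          have e2 : eF n i * bF n i i * bF n i i = -1 := by
            rw [eF_lt (by omega), bF_lt_self hc]; norm_num
          have e3 : bF n (i + 1) i = 0 := bF_succ_zero (by omega)
          rw [e1, e2, e3]
          have : MF n i i = -2 := by unfold MF; rw [if_pos rfl, if_pos hc]
          rw [this]; ring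
        · have e1 : eF n (i - 1) * bF n (i - 1) i * bF n (i - 1) i = -1 := by
            rw [eF_lt (by omega), bF_pred hipos (by omega)]; norm_num
          have e2 : bF n i i = 0 := by rw [hc]; exact bF_mid
          have e3 : eF n (i + 1) * bF n (i + 1) i * bF n (i + 1) i = 1 := by
            rw [eF_ge (by omega), bF_succ (by omega)]; norm_num
          rw [e1, e2, e3]
          have : MF n i i = 0 := by
            unfold MF; rw [if_pos rfl, if_neg (by omega), if_pos hc]
          rw [this]; ring
        · have e1 : bF n (i - 1) i = 0 := bF_pred_zero hipos (by omega)
          have e2 : eF n i * bF n i i * bF n i i = 1 := by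
            rw [eF_ge (by omega), bF_gt_self hc]; norm_num
          have e3 : eF n (i + 1) * bF n (i + 1) i * bF n (i + 1) i = 1 := by
            rw [eF_ge (by omega), bF_succ (by omega)]; norm_num
          rw [e1, e2, e3]
          have : MF n i i = 2 := by
            unfold MF; rw [if_pos rfl, if_neg (by omega), if_neg (by omega)]
          rw [this]; ring
      · -- i = 2n-3
        subst hic
        rw [sum_two (f := fun k => eF n k * bF n k (2*n - 3) * bF n k (2*n - 3))
            (a := 2*n - 4) (b := 2*n - 3)
            (by omega) (by omega) (by omega)
            (fun k _ h1 h2 => by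
              show eF n k * bF n k (2*n - 3) * bF n k (2*n - 3) = 0
              rw [bF_eq_zero (by omega) (by omega) (by omega)]; ring)]
        beta_reduce
        have e1 : bF n (2*n - 4) (2*n - 3) = 0 := by
          rw [show 2*n - 4 = (2*n - 3) - 1 from by omega]
          exact bF_pred_zero (by omega) (by omega)
        have e2 : eF n (2*n - 3) * bF n (2*n - 3) (2*n - 3) * bF n (2*n - 3) (2*n - 3) = 1 := by
          rw [eF_ge (by omega), bF_gt_self (by omega)]; norm_num
        rw [e1, e2, if_neg (by omega : ¬((2*n - 3 : ℕ) = 0 ∧ (2*n - 3 : ℕ) = 0)),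
          if_pos ⟨rfl, rfl⟩]
        have : MF n (2*n - 3) (2*n - 3) = 2 := by
          unfold MF; rw [if_pos rfl, if_neg (by omega), if_neg (by omega)]
        rw [this]; ring
      · omega
  · -- i < j
    rcases eq_or_lt_of_le (show i + 1 ≤ j by omega) with hji | hji
    · -- j = i + 1
      subst hji
      rw [sum_two (f := fun k => eF n k * bF n k i * bF n k (i + 1)) (a := i) (b := i + 1)
          (by omega) (by omega) (by omega)
          (fun k _ h1 h2 => by
            show eF n k * bF n k i * bF n k (i + 1) = 0
            unfold bF; split_ifs <;> first | (exfalso; omega) | ring)]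
      beta_reduce
      rw [if_neg (by omega : ¬(i = 0 ∧ i + 1 = 0)),
        if_neg (by omega : ¬(i = 2*n - 3 ∧ i + 1 = 2*n - 3))]
      rcases lt_trichotomy i (n - 2) with hc | hc | hc
      · have e1 : eF n i * bF n i i * bF n i (i + 1) = 1 := by
          rw [eF_lt (by omega), bF_lt_self hc, bF_lt_succ hc]; norm_num
        have e2 : bF n (i + 1) i = 0 := bF_succ_zero (by omega)
        rw [e1, e2]
        have : MF n i (i + 1) = 1 := by
          unfold MF; rw [if_neg (by omega), if_pos rfl, if_pos hc]
        rw [this]; ring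
      · have e1 : bF n i i = 0 := by rw [hc]; exact bF_mid
        have e2 : eF n (i + 1) * bF n (i + 1) i * bF n (i + 1) (i + 1) = -1 := by
          rw [eF_ge (by omega), bF_succ (by omega), bF_gt_self (by omega)]; norm_num
        rw [e1, e2]
        have : MF n i (i + 1) = -1 := by
          unfold MF; rw [if_neg (by omega), if_pos rfl, if_neg (by omega)]
        rw [this]; ring
      · have e1 : bF n i (i + 1) = 0 := bF_gt_zero hc (by omega) (by omega)
        have e2 : eF n (i + 1) * bF n (i + 1) i * bF n (i + 1) (i + 1) = -1 := by
          rw [eF_ge (by omega), bF_succ (by omega), bF_gt_self (by omega)]; norm_num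
        rw [e1, e2]
        have : MF n i (i + 1) = -1 := by
          unfold MF; rw [if_neg (by omega), if_pos rfl, if_neg (by omega)]
        rw [this]; ring
    · -- j ≥ i + 2
      rw [Finset.sum_eq_zero (fun k _ => by
        show eF n k * bF n k i * bF n k j = 0
        unfold bF; split_ifs <;> first | (exfalso; omega) | ring)]
      rw [if_neg (by omega : ¬(i = 0 ∧ j = 0)),
        if_neg (by omega : ¬(i = 2*n - 3 ∧ j = 2*n - 3))]
      have : MF n i j = 0 := by
        unfold MF
        rw [if_neg (by omega), if_neg (by omega), if_neg (by omega)]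
      rw [this]; ring

lemma key2' {n i j : ℕ} (hn : 2 ≤ n) (hi : i < 2*n - 2) (hj : j < 2*n - 2) (hij : i ≤ j) :
    ∑ k ∈ range (2*n - 2), LF n k i * eF n k * LF n k j = MF n i j := by
  have step1 : ∑ k ∈ range (2*n - 2), LF n k i * eF n k * LF n k j
      = (∑ k ∈ range (2*n - 2), eF n k * bF n k i * bF n k j)
        + (∑ k ∈ range (2*n - 2), bF n k i) * (-(1/2) * rF n j)
        + (∑ k ∈ range (2*n - 2), bF n k j) * (-(1/2) * rF n i)
        + (∑ k ∈ range (2*n - 2), eF n k) * (rF n i * rF n j / 4) := by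
    rw [Finset.sum_mul, Finset.sum_mul, Finset.sum_mul, ← Finset.sum_add_distrib,
      ← Finset.sum_add_distrib, ← Finset.sum_add_distrib]
    refine Finset.sum_congr rfl fun k _ => ?_
    have h1 : eF n k * cF n k = -(1/2) := by
      unfold eF cF; split_ifs <;> (try norm_num) <;> omega
    have h2 : cF n k * cF n k = 1/4 := by
      unfold cF; split_ifs <;> norm_num
    unfold LF
    linear_combination (bF n k i * rF n j + bF n k j * rF n i) * h1
      + (eF n k * rF n i * rF n j) * h2
  rw [step1, sum_ebb hn hi hj hij, sum_bF hn hi, sum_bF hn hj, sum_eF hn]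
  unfold rF
  split_ifs <;> first | (exfalso; omega) | ring

lemma key2 {n i j : ℕ} (hn : 2 ≤ n) (hi : i < 2*n - 2) (hj : j < 2*n - 2) :
    ∑ k ∈ range (2*n - 2), LF n k i * eF n k * LF n k j = MF n i j := by
  rcases le_or_gt i j with hij | hij
  · exact key2' hn hi hj hij
  · rw [Finset.sum_congr rfl (fun k _ => by
      show LF n k i * eF n k * LF n k j = LF n k j * eF n k * LF n k i; ring)]
    rw [key2' hn hj hi (le_of_lt hij), MF_symm]


end Stmt11

/-- As a real symmetric matrix, `M_n` has signature zero: it is congruent over `ℝ`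
to the diagonal matrix with `n-1` entries `-1` followed by `n-1` entries `+1`. -/
theorem stmt_11 (n : ℕ) (hn : 2 ≤ n) :
    ∃ P : Matrix (Fin (2 * n - 2)) (Fin (2 * n - 2)) ℝ, IsUnit P ∧
      P.transpose * (Mn n).map (Int.cast : ℤ → ℝ) * P =
        Matrix.diagonal (fun i : Fin (2 * n - 2) =>
          if (i : ℕ) < n - 1 then (-1 : ℝ) else 1) := by
  classical
  let L : Matrix (Fin (2*n - 2)) (Fin (2*n - 2)) ℝ :=
    Matrix.of fun k i => Stmt11.LF n (k : ℕ) (i : ℕ)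
  let P : Matrix (Fin (2*n - 2)) (Fin (2*n - 2)) ℝ :=
    Matrix.of fun i k => Stmt11.PF n (i : ℕ) (k : ℕ)
  let E : Matrix (Fin (2*n - 2)) (Fin (2*n - 2)) ℝ :=
    Matrix.diagonal (fun i : Fin (2*n - 2) => if (i : ℕ) < n - 1 then (-1:ℝ) else 1)
  have hLP : L * P = 1 := by
    ext k j
    rw [Matrix.mul_apply, Matrix.one_apply]
    have h1 : ∑ i : Fin (2*n - 2), L k i * P i j
        = ∑ t ∈ Finset.range (2*n - 2), Stmt11.LF n (k : ℕ) t * Stmt11.PF n t (j : ℕ) :=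
      Fin.sum_univ_eq_sum_range (fun t => Stmt11.LF n (k : ℕ) t * Stmt11.PF n t (j : ℕ)) (2*n - 2)
    rw [h1, Stmt11.key1 hn k.isLt j.isLt]
    exact if_congr (Fin.val_eq_val k j) rfl rfl
  have hPL : P * L = 1 := mul_eq_one_comm.mp hLP
  have hmul : L.transpose * E * L = (Mn n).map (Int.cast : ℤ → ℝ) := by
    ext i j
    have h1 : (L.transpose * E * L) i j = ∑ k : Fin (2*n - 2), L k i * Stmt11.eF n k * L k j := by
      rw [Matrix.mul_apply]
      refine Finset.sum_congr rfl fun k _ => ?_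
      rw [Matrix.mul_diagonal, Matrix.transpose_apply]
      show L k i * (if (k : ℕ) < n - 1 then (-1:ℝ) else 1) * L k j = _
      rw [show (if (k : ℕ) < n - 1 then (-1:ℝ) else 1) = Stmt11.eF n k from rfl]
    have h2 : ∑ k : Fin (2*n - 2), L k i * Stmt11.eF n k * L k j
        = ∑ t ∈ Finset.range (2*n - 2), Stmt11.LF n t (i : ℕ) * Stmt11.eF n t * Stmt11.LF n t (j : ℕ) :=
      Fin.sum_univ_eq_sum_range
        (fun t => Stmt11.LF n t (i : ℕ) * Stmt11.eF n t * Stmt11.LF n t (j : ℕ)) (2*n - 2)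
    rw [h1, h2, Stmt11.key2 hn i.isLt j.isLt]
    show Stmt11.MF n (i : ℕ) (j : ℕ) = ((Mn n i j : ℤ) : ℝ)
    unfold Stmt11.MF Mn
    simp only [Matrix.of_apply, apply_ite (fun z : ℤ => (z : ℝ))]
    push_cast
    rfl
  refine ⟨P, @isUnit_of_invertible _ _ P ⟨L, hLP, hPL⟩, ?_⟩
  rw [← hmul]
  have : P.transpose * (L.transpose * E * L) * P = (L * P).transpose * E * (L * P) := by
    rw [Matrix.transpose_mul]
    simp only [Matrix.mul_assoc]
  rw [this, hLP, Matrix.transpose_one, Matrix.one_mul, Matrix.mul_one]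
end

section
/- For every integer n ≥ 2, the matrix M_n is congruent over ℤ to the direct sum of n−1 copies of the hyperbolic plane H = [[0, 1], [1, 0]]: there exists an integer (2n−2)×(2n−2) matrix P, invertible over ℤ (i.e. det P = ±1), such that Pᵀ M_n P equals the block-diagonal matrix B_n with B_n(2k, 2k+1) = B_n(2k+1, 2k) = 1 for k = 0, 1, …, n−2 and all other entries 0. -/
/-- The direct sum of `n-1` copies of the hyperbolic plane `H = [[0,1],[1,0]]`:
the `(2n-2) × (2n-2)` block-diagonal matrix with `B(2k, 2k+1) = B(2k+1, 2k) = 1`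
for `k = 0, …, n-2` and all other entries `0`. -/
def Bn (n : ℕ) : Matrix (Fin (2 * n - 2)) (Fin (2 * n - 2)) ℤ :=
  Matrix.of fun i j =>
    if (i : ℕ) % 2 = 0 ∧ (j : ℕ) = (i : ℕ) + 1 then 1
    else if (j : ℕ) % 2 = 0 ∧ (i : ℕ) = (j : ℕ) + 1 then 1
    else 0

def tentZ (n j T : ℤ) : ℤ := max 0 (min (j + 3 - n + T) (j - 1 + n - T))

def pcol (n j ty T : ℤ) : ℤ :=
  if ty = 0 then tentZ n j T
  else if ty = 1 then (if n - 3 - j ≤ T ∧ T ≤ n - 2 + j then 1 else 0)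
  else -(tentZ n j T) - (if T = n - 1 + j then 1 else 0)

def qcol (n j ty T : ℤ) : ℤ :=
  if ty = 0 then (if T = n - 3 - j then 1 else 0) - (if T = n - 1 + j then 1 else 0)
  else (if T = n - 4 - j then 1 else 0) - (if T = n - 3 - j then 1 else 0)
     + (if T = n - 2 + j then 1 else 0) - (if T = n - 1 + j then 1 else 0)

def OkTy (n j ty : ℤ) : Prop :=
  ty = 0 ∧ 0 ≤ j ∧ j ≤ n - 2 ∨ ty = 1 ∧ 0 ≤ j ∧ j ≤ n - 3 ∨ ty = 2 ∧ j = n - 2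

def Pm (n : ℕ) : Matrix (Fin (2 * n - 2)) (Fin (2 * n - 2)) ℤ :=
  Matrix.of fun t k =>
    pcol n ((k : ℕ) / 2 : ℕ)
      (if (k : ℕ) % 2 = 0 then 0 else if (k : ℕ) / 2 < n - 2 then 1 else 2)
      ((t : ℕ) : ℤ)

def Qm (n : ℕ) : Matrix (Fin (2 * n - 2)) (Fin (2 * n - 2)) ℤ :=
  Matrix.of fun t k =>
    qcol n ((k : ℕ) / 2 : ℕ) (if (k : ℕ) % 2 = 0 then 0 else 1) ((t : ℕ) : ℤ)

lemma sum_ite_nat {N : ℕ} (c : ℕ) (f : Fin N → ℤ) :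
    (∑ t : Fin N, if (t : ℕ) = c then f t else 0) = if h : c < N then f ⟨c, h⟩ else 0 := by
  split_ifs with h
  · rw [Finset.sum_eq_single (⟨c, h⟩ : Fin N)]
    · simp
    · intro b _ hb
      exact if_neg fun hc => hb (Fin.ext hc)
    · intro h'; exact absurd (Finset.mem_univ _) h'
  · exact Finset.sum_eq_zero fun t _ => if_neg fun hc => h (by have := t.isLt; omega)

lemma sum_ite_shift {N : ℕ} (a c : ℕ) (f : Fin N → ℤ) :
    (∑ t : Fin N, if (t : ℕ) + a = c then f t else 0)
      = if h : a ≤ c ∧ c - a < N then f ⟨c - a, h.2⟩ else 0 := by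
  split_ifs with h
  · rw [Finset.sum_eq_single (⟨c - a, h.2⟩ : Fin N)]
    · exact if_pos (by show c - a + a = c; omega)
    · intro b _ hb
      exact if_neg fun hc => hb (Fin.ext (show (b : ℕ) = c - a by omega))
    · intro h'; exact absurd (Finset.mem_univ _) h'
  · exact Finset.sum_eq_zero fun t _ => if_neg fun hc => h (by have := t.isLt; omega)

lemma sum_ite_int {N : ℕ} (c : ℤ) (f : Fin N → ℤ) :
    (∑ t : Fin N, if ((t : ℕ) : ℤ) = c then f t else 0)
      = if h : 0 ≤ c ∧ c.toNat < N then f ⟨c.toNat, h.2⟩ else 0 := by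
  split_ifs with h
  · rw [Finset.sum_eq_single (⟨c.toNat, h.2⟩ : Fin N)]
    · exact if_pos (by show ((c.toNat : ℕ) : ℤ) = c; omega)
    · intro b _ hb
      exact if_neg fun hc => hb (Fin.ext (show (b : ℕ) = c.toNat by omega))
    · intro h'; exact absurd (Finset.mem_univ _) h'
  · refine Finset.sum_eq_zero fun t _ => ?_
    have ht := t.isLt
    rw [if_neg fun hc => h (by omega)]

lemma pcol_out {n : ℕ} (hn : 2 ≤ n) {j ty T : ℤ} (hty : OkTy n j ty)
    (hT : T < 0 ∨ ((2 * n - 2 : ℕ) : ℤ) ≤ T) : pcol n j ty T = 0 := by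
  rcases hty with ⟨h, hj⟩ | ⟨h, hj⟩ | ⟨h, hj⟩ <;> subst h <;>
    simp only [pcol, tentZ, reduceIte] <;> first | (split_ifs <;> omega) | omega

lemma dite_mul_pcol {n : ℕ} (hn : 2 ≤ n) {j ty : ℤ} (hty : OkTy n j ty) (a : ℤ) (c : ℕ) :
    (if h : c < 2 * n - 2 then a * pcol n j ty ((c : ℕ) : ℤ) else 0)
      = a * pcol n j ty (c : ℤ) := by
  split_ifs with h
  · rfl
  · rw [pcol_out hn hty (by omega), mul_zero]

lemma dite_mul_pcol_pred {n : ℕ} (hn : 2 ≤ n) {j ty : ℤ} (hty : OkTy n j ty) (a : ℤ) (c : ℕ) :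
    (if h : 1 ≤ c ∧ c - 1 < 2 * n - 2 then a * pcol n j ty ((c - 1 : ℕ) : ℤ) else 0)
      = a * pcol n j ty ((c : ℤ) - 1) := by
  split_ifs with h
  · rw [show ((c - 1 : ℕ) : ℤ) = (c : ℤ) - 1 by omega]
  · rcases Nat.lt_or_ge c 1 with h1 | h1
    · rw [pcol_out hn hty (by omega), mul_zero]
    · rw [pcol_out hn hty (by omega), mul_zero]

section KeyLemmas

lemma h00' : (((0 : ℤ) = 0)) = True := by norm_num
lemma h10' : (((1 : ℤ) = 0)) = False := by norm_num
lemma h11' : (((1 : ℤ) = 1)) = True := by norm_num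
lemma h20' : (((2 : ℤ) = 0)) = False := by norm_num
lemma h21' : (((2 : ℤ) = 1)) = False := by norm_num

lemma tent_left {n j T : ℤ} (h : T ≤ n - 2) : tentZ n j T = max 0 (j + 3 - n + T) := by
  simp only [tentZ]; omega

lemma tent_right {n j T : ℤ} (h : n - 2 ≤ T) : tentZ n j T = max 0 (j - 1 + n - T) := by
  simp only [tentZ]; omega

lemma keyA0 {n : ℕ} (hn : 2 ≤ n) (j : ℤ) (hj0 : 0 ≤ j) (hj : j ≤ (n : ℤ) - 2)
    (i : ℕ) (hN : i < 2 * n - 2) :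
    (if i < n - 2 then (-2 : ℤ) else if i = n - 2 then 0 else 2) * pcol n j 0 i
    + (if i < n - 2 then (1 : ℤ) else -1) * pcol n j 0 ((i : ℤ) + 1)
    + (if i < n - 1 then (1 : ℤ) else -1) * pcol n j 0 ((i : ℤ) - 1)
    = qcol n j 0 (i : ℤ) := by
  simp only [pcol, qcol, h00', ne_eq, not_true, not_false_eq_true, true_and, and_true, false_and, and_false, if_true, if_false]
  rcases show i + 1 ≤ n - 2 ∨ i = n - 2 ∨ n - 1 ≤ i by omega with h | h | h
  · rw [tent_left (T := (i : ℤ)) (by omega), tent_left (T := (i : ℤ) + 1) (by omega),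
      tent_left (T := (i : ℤ) - 1) (by omega),
      if_pos (show i < n - 2 by omega), if_pos (show i < n - 2 by omega),
      if_pos (show i < n - 1 by omega)]
    first | (split_ifs <;> omega) | omega
  · rw [tent_left (T := (i : ℤ)) (by omega), tent_right (T := (i : ℤ) + 1) (by omega),
      tent_left (T := (i : ℤ) - 1) (by omega),
      if_neg (show ¬ i < n - 2 by omega), if_pos h,
      if_neg (show ¬ i < n - 2 by omega), if_pos (show i < n - 1 by omega)]
    first | (split_ifs <;> omega) | omega
  · rw [tent_right (T := (i : ℤ)) (by omega), tent_right (T := (i : ℤ) + 1) (by omega),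
      tent_right (T := (i : ℤ) - 1) (by omega),
      if_neg (show ¬ i < n - 2 by omega), if_neg (show ¬ i = n - 2 by omega),
      if_neg (show ¬ i < n - 2 by omega)]
    by_cases h1 : i < n - 1
    · rw [if_pos h1]
      first | (split_ifs <;> omega) | omega
    · rw [if_neg h1]
      first | (split_ifs <;> omega) | omega

lemma keyA1 {n : ℕ} (hn : 2 ≤ n) (j : ℤ) (hj0 : 0 ≤ j) (hj : j ≤ (n : ℤ) - 3)
    (i : ℕ) (hN : i < 2 * n - 2) :
    (if i < n - 2 then (-2 : ℤ) else if i = n - 2 then 0 else 2) * pcol n j 1 i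
    + (if i < n - 2 then (1 : ℤ) else -1) * pcol n j 1 ((i : ℤ) + 1)
    + (if i < n - 1 then (1 : ℤ) else -1) * pcol n j 1 ((i : ℤ) - 1)
    = qcol n j 1 (i : ℤ) := by
  simp only [pcol, qcol, h10', h11', ne_eq, not_true, not_false_eq_true, true_and, and_true, false_and, and_false, if_true, if_false]
  rcases show i < n - 2 ∨ i = n - 2 ∨ n - 1 ≤ i by omega with h | h | h
  · rw [if_pos h, if_pos h, if_pos (show i < n - 1 by omega)]
    first | (split_ifs <;> omega) | omega
  · rw [if_neg (show ¬ i < n - 2 by omega), if_pos h,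
      if_neg (show ¬ i < n - 2 by omega), if_pos (show i < n - 1 by omega)]
    first | (split_ifs <;> omega) | omega
  · rw [if_neg (show ¬ i < n - 2 by omega), if_neg (show ¬ i = n - 2 by omega),
      if_neg (show ¬ i < n - 2 by omega)]
    by_cases h1 : i < n - 1
    · rw [if_pos h1]
      first | (split_ifs <;> omega) | omega
    · rw [if_neg h1]
      first | (split_ifs <;> omega) | omega

lemma keyA2 {n : ℕ} (hn : 2 ≤ n) (i : ℕ) (hN : i < 2 * n - 2) :
    (if i < n - 2 then (-2 : ℤ) else if i = n - 2 then 0 else 2) * pcol n ((n : ℤ) - 2) 2 i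
    + (if i < n - 2 then (1 : ℤ) else -1) * pcol n ((n : ℤ) - 2) 2 ((i : ℤ) + 1)
    + (if i < n - 1 then (1 : ℤ) else -1) * pcol n ((n : ℤ) - 2) 2 ((i : ℤ) - 1)
    = qcol n ((n : ℤ) - 2) 1 (i : ℤ) := by
  simp only [pcol, qcol, h20', h21', h10', h11', ne_eq, not_true, not_false_eq_true, true_and, and_true, false_and, and_false, if_true, if_false]
  rcases show i + 1 ≤ n - 2 ∨ i = n - 2 ∨ n - 1 ≤ i by omega with h | h | h
  · rw [tent_left (T := (i : ℤ)) (by omega), tent_left (T := (i : ℤ) + 1) (by omega),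
      tent_left (T := (i : ℤ) - 1) (by omega),
      if_pos (show i < n - 2 by omega), if_pos (show i < n - 2 by omega),
      if_pos (show i < n - 1 by omega)]
    first | (split_ifs <;> omega) | omega
  · rw [tent_left (T := (i : ℤ)) (by omega), tent_right (T := (i : ℤ) + 1) (by omega),
      tent_left (T := (i : ℤ) - 1) (by omega),
      if_neg (show ¬ i < n - 2 by omega), if_pos h,
      if_neg (show ¬ i < n - 2 by omega), if_pos (show i < n - 1 by omega)]
    first | (split_ifs <;> omega) | omega
  · rw [tent_right (T := (i : ℤ)) (by omega), tent_right (T := (i : ℤ) + 1) (by omega),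
      tent_right (T := (i : ℤ) - 1) (by omega),
      if_neg (show ¬ i < n - 2 by omega), if_neg (show ¬ i = n - 2 by omega),
      if_neg (show ¬ i < n - 2 by omega)]
    by_cases h1 : i < n - 1
    · rw [if_pos h1]
      first | (split_ifs <;> omega) | omega
    · rw [if_neg h1]
      first | (split_ifs <;> omega) | omega

end KeyLemmas

lemma keyA {n : ℕ} (hn : 2 ≤ n) (j ty : ℤ) (hty : OkTy n j ty)
    (i : ℕ) (hN : i < 2 * n - 2) :
    (if i < n - 2 then (-2 : ℤ) else if i = n - 2 then 0 else 2) * pcol n j ty i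
    + (if i < n - 2 then (1 : ℤ) else -1) * pcol n j ty ((i : ℤ) + 1)
    + (if i < n - 1 then (1 : ℤ) else -1) * pcol n j ty ((i : ℤ) - 1)
    = qcol n j (if ty = 0 then 0 else 1) (i : ℤ) := by
  rcases hty with ⟨h, hj0, hjb⟩ | ⟨h, hj0, hjb⟩ | ⟨h, hjb⟩ <;> subst h
  · rw [if_pos rfl]
    exact keyA0 hn j hj0 hjb i hN
  · rw [if_neg (by norm_num : ¬(1 : ℤ) = 0)]
    exact keyA1 hn j hj0 hjb i hN
  · rw [if_neg (by norm_num : ¬(2 : ℤ) = 0)]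
    subst hjb
    exact keyA2 hn i hN

lemma Mn_apply (n : ℕ) (i t : Fin (2 * n - 2)) :
    Mn n i t =
      (if (t : ℕ) = (i : ℕ) then
        (if (i : ℕ) < n - 2 then -2 else if (i : ℕ) = n - 2 then 0 else 2) else 0)
      + (if (t : ℕ) = (i : ℕ) + 1 then (if (i : ℕ) < n - 2 then 1 else -1) else 0)
      + (if (t : ℕ) + 1 = (i : ℕ) then (if (i : ℕ) < n - 1 then 1 else -1) else 0) := by
  simp only [Mn, Matrix.of_apply]
  split_ifs <;> omega

set_option maxHeartbeats 1000000 in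
lemma Mn_mul_Pm (n : ℕ) (hn : 2 ≤ n) : Mn n * Pm n = Qm n := by
  ext i k
  rw [Matrix.mul_apply]
  have hi := i.isLt
  have hk := k.isLt
  have hty : OkTy n ((k : ℕ) / 2 : ℕ)
      (if (k : ℕ) % 2 = 0 then 0 else if (k : ℕ) / 2 < n - 2 then 1 else 2) := by
    unfold OkTy
    split_ifs
    · exact Or.inl ⟨rfl, by omega⟩
    · exact Or.inr (Or.inl ⟨rfl, by omega⟩)
    · exact Or.inr (Or.inr ⟨rfl, by omega⟩)
  simp only [Mn_apply]
  generalize hD : (if (i : ℕ) < n - 2 then (-2 : ℤ) else if (i : ℕ) = n - 2 then 0 else 2) = D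
  generalize hS1 : (if (i : ℕ) < n - 2 then (1 : ℤ) else -1) = S1
  generalize hS2 : (if (i : ℕ) < n - 1 then (1 : ℤ) else -1) = S2
  simp only [add_mul, ite_mul, zero_mul, Finset.sum_add_distrib,
    sum_ite_nat, sum_ite_shift, Pm, Qm, Matrix.of_apply]
  rw [dite_mul_pcol hn hty D (i : ℕ), dite_mul_pcol hn hty S1 ((i : ℕ) + 1),
    dite_mul_pcol_pred hn hty S2 (i : ℕ)]
  subst hD hS1 hS2
  have hkey := keyA hn ((k : ℕ) / 2 : ℕ) _ hty i hi
  push_cast at hkey ⊢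
  rw [hkey]
  by_cases hke : (k : ℕ) % 2 = 0
  · simp only [hke, reduceIte]
  · simp only [if_neg hke]
    split_ifs <;> first | rfl | omega
lemma dite_pcol_int {n : ℕ} (hn : 2 ≤ n) {j ty : ℤ} (hty : OkTy n j ty) (c : ℤ) :
    (if h : 0 ≤ c ∧ c.toNat < 2 * n - 2 then pcol n j ty ((c.toNat : ℕ) : ℤ) else 0)
      = pcol n j ty c := by
  split_ifs with h
  · rw [show ((c.toNat : ℕ) : ℤ) = c by omega]
  · exact (pcol_out hn hty (by omega)).symm

lemma keyB_even {n : ℕ} (hn : 2 ≤ n) (j j' ty : ℤ) (hty : OkTy n j ty)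
    (hj' : 0 ≤ j' ∧ j' ≤ (n : ℤ) - 2) :
    pcol n j ty ((n : ℤ) - 3 - j') - pcol n j ty ((n : ℤ) - 1 + j')
      = if ty ≠ 0 ∧ j = j' then 1 else 0 := by
  rcases hty with ⟨h, hj0, hjb⟩ | ⟨h, hj0, hjb⟩ | ⟨h, hjb⟩ <;> subst h
  · simp only [pcol, h00', ne_eq, not_true, not_false_eq_true, true_and, and_true, false_and, and_false, if_true, if_false]
    rw [tent_left (show (n : ℤ) - 3 - j' ≤ (n : ℤ) - 2 by omega),
      tent_right (show (n : ℤ) - 2 ≤ (n : ℤ) - 1 + j' by omega)]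
    first | (split_ifs <;> omega) | omega
  · simp only [pcol, h10', h11', ne_eq, not_true, not_false_eq_true, true_and, and_true, false_and, and_false, if_true, if_false]
    first | (split_ifs <;> omega) | omega
  · simp only [pcol, h20', h21', ne_eq, not_true, not_false_eq_true, true_and, and_true, false_and, and_false, if_true, if_false]
    rw [tent_left (show (n : ℤ) - 3 - j' ≤ (n : ℤ) - 2 by omega),
      tent_right (show (n : ℤ) - 2 ≤ (n : ℤ) - 1 + j' by omega)]
    first | (split_ifs <;> omega) | omega

lemma keyB_odd {n : ℕ} (hn : 2 ≤ n) (j j' ty : ℤ) (hty : OkTy n j ty)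
    (hj' : 0 ≤ j' ∧ j' ≤ (n : ℤ) - 2) :
    pcol n j ty ((n : ℤ) - 4 - j') - pcol n j ty ((n : ℤ) - 3 - j')
      + pcol n j ty ((n : ℤ) - 2 + j') - pcol n j ty ((n : ℤ) - 1 + j')
      = if ty = 0 ∧ j = j' then 1 else 0 := by
  rcases hty with ⟨h, hj0, hjb⟩ | ⟨h, hj0, hjb⟩ | ⟨h, hjb⟩ <;> subst h
  · simp only [pcol, h00', ne_eq, not_true, not_false_eq_true, true_and, and_true, false_and, and_false, if_true, if_false]
    rw [tent_left (show (n : ℤ) - 4 - j' ≤ (n : ℤ) - 2 by omega),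
      tent_left (show (n : ℤ) - 3 - j' ≤ (n : ℤ) - 2 by omega),
      tent_right (show (n : ℤ) - 2 ≤ (n : ℤ) - 2 + j' by omega),
      tent_right (show (n : ℤ) - 2 ≤ (n : ℤ) - 1 + j' by omega)]
    first | (split_ifs <;> omega) | omega
  · simp only [pcol, h10', h11', ne_eq, not_true, not_false_eq_true, true_and, and_true, false_and, and_false, if_true, if_false]
    first | (split_ifs <;> omega) | omega
  · simp only [pcol, h20', h21', ne_eq, not_true, not_false_eq_true, true_and, and_true, false_and, and_false, if_true, if_false]
    rw [tent_left (show (n : ℤ) - 4 - j' ≤ (n : ℤ) - 2 by omega),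
      tent_left (show (n : ℤ) - 3 - j' ≤ (n : ℤ) - 2 by omega),
      tent_right (show (n : ℤ) - 2 ≤ (n : ℤ) - 2 + j' by omega),
      tent_right (show (n : ℤ) - 2 ≤ (n : ℤ) - 1 + j' by omega)]
    first | (split_ifs <;> omega) | omega

set_option maxHeartbeats 1000000 in
lemma Pm_mul_Qm (n : ℕ) (hn : 2 ≤ n) : (Pm n).transpose * Qm n = Bn n := by
  ext i k
  rw [Matrix.mul_apply]
  have hi := i.isLt
  have hk := k.isLt
  have hty : OkTy n ((i : ℕ) / 2 : ℕ)
      (if (i : ℕ) % 2 = 0 then 0 else if (i : ℕ) / 2 < n - 2 then 1 else 2) := by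
    unfold OkTy
    split_ifs
    · exact Or.inl ⟨rfl, by omega⟩
    · exact Or.inr (Or.inl ⟨rfl, by omega⟩)
    · exact Or.inr (Or.inr ⟨rfl, by omega⟩)
  have hj' : (0 : ℤ) ≤ ((k : ℕ) / 2 : ℕ) ∧ ((k : ℕ) / 2 : ℕ) ≤ (n : ℤ) - 2 := by
    constructor <;> omega
  have h10 : (((1 : ℤ) = 0)) = False := by norm_num
  have h00 : (((0 : ℤ) = 0)) = True := by norm_num
  by_cases hke : (k : ℕ) % 2 = 0
  · simp only [Matrix.transpose_apply, Pm, Qm, Matrix.of_apply, qcol, hke, reduceIte,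
      h10, h00, if_true, if_false,
      mul_sub, mul_ite, mul_one, mul_zero, Finset.sum_sub_distrib, sum_ite_int]
    rw [dite_pcol_int hn hty, dite_pcol_int hn hty,
      keyB_even hn _ _ _ hty hj']
    simp only [Bn, Matrix.of_apply]
    first | (split_ifs <;> omega) | omega
  · simp only [Matrix.transpose_apply, Pm, Qm, Matrix.of_apply, qcol, if_neg hke, reduceIte,
      h10, h00, if_true, if_false,
      mul_sub, mul_add, mul_ite, mul_one, mul_zero, Finset.sum_sub_distrib,
      Finset.sum_add_distrib, sum_ite_int]
    rw [dite_pcol_int hn hty, dite_pcol_int hn hty, dite_pcol_int hn hty,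
      dite_pcol_int hn hty, keyB_odd hn _ _ _ hty hj']
    simp only [Bn, Matrix.of_apply]
    first | (split_ifs <;> omega) | omega

lemma Bn_apply (n : ℕ) (i t : Fin (2 * n - 2)) :
    Bn n i t = if (t : ℕ) = (if (i : ℕ) % 2 = 0 then (i : ℕ) + 1 else (i : ℕ) - 1)
      then 1 else 0 := by
  simp only [Bn, Matrix.of_apply]
  split_ifs <;> omega

lemma Bn_mul_Bn (n : ℕ) : Bn n * Bn n = 1 := by
  ext i k
  rw [Matrix.mul_apply]
  have hi := i.isLt
  have hk := k.isLt
  simp only [Bn_apply, ite_mul, one_mul, zero_mul, sum_ite_nat]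
  rw [show ((⟨(i : ℕ), hi⟩ : Fin (2 * n - 2)) : ℕ) = (i : ℕ) from rfl]
  simp only [Matrix.one_apply, Fin.ext_iff]
  split_ifs <;> omega

/-- `M_n` is congruent over `ℤ` to the direct sum of `n-1` hyperbolic planes. -/
theorem stmt_13 (n : ℕ) (hn : 2 ≤ n) :
    ∃ P : Matrix (Fin (2 * n - 2)) (Fin (2 * n - 2)) ℤ,
      (P.det = 1 ∨ P.det = -1) ∧ P.transpose * Mn n * P = Bn n := by
  have hPMP : (Pm n).transpose * Mn n * Pm n = Bn n := by
    rw [Matrix.mul_assoc, Mn_mul_Pm n hn, Pm_mul_Qm n hn]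
  refine ⟨Pm n, ?_, hPMP⟩
  have hBu : IsUnit (Bn n).det := Matrix.isUnit_det_of_left_inverse (Bn_mul_Bn n)
  have hdvd : (Pm n).det ∣ (Bn n).det := by
    refine ⟨(Pm n).transpose.det * (Mn n).det, ?_⟩
    rw [← hPMP, Matrix.det_mul, Matrix.det_mul]
    ring
  exact Int.isUnit_iff.mp (isUnit_of_dvd_unit hdvd hBu)
end
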